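/- arXiv:math/0608539 — 6 statements merged into one kernel-verified Lean document; each statement's English description precedes it below -/
import Mathlib

section
/- Let B be a p-adic Banach algebra over ℚ_p (a unital ℚ_p-algebra complete with respect to a nonarchimedean submultiplicative norm with ‖1‖ = 1 and ‖λx‖ = |λ|_p ‖x‖) whose norm takes values in p^ℤ ∪ {0}, and let A = {b ∈ B : ‖b‖ ≤ 1}. If the residue algebra A/pA has no zero divisors, then every unit of B can be written uniquely as p^n · a with n ∈ ℤ and a ∈ A^*; in particular B^* = p^ℤ · A^* and p^ℤ ∩ A^* = {1}. -/
/-!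
Rescaling a unit `b` by `p ^ n`, where `‖b‖ = p ^ n`, gives a unit of norm `1`, and the
exponent is forced by the norm. The point is that a unit `u` of norm `1` lies in `A^*`: if
`‖u⁻¹‖ = p ^ m` with `m ≥ 1`, then `u` and `p ^ m • u⁻¹` both have norm `1` while their product
`p ^ m` lies in `pA`, so their images in `A/pA` would be zero divisors.
-/

section

variable {B : Type*} [NormedRing B]

theorem Units.norm_eq_one_of_norm_le_one_of_norm_inv_le_one [NormOneClass B] (u : Bˣ)
    (hu : ‖(u : B)‖ ≤ 1) (hu_inv : ‖((u⁻¹ : Bˣ) : B)‖ ≤ 1) : ‖(u : B)‖ = 1 := by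
  refine le_antisymm hu ?_
  calc (1 : ℝ) = ‖(u : B) * ((u⁻¹ : Bˣ) : B)‖ := by rw [Units.mul_inv, norm_one]
    _ ≤ ‖(u : B)‖ * ‖((u⁻¹ : Bˣ) : B)‖ := norm_mul_le _ _
    _ ≤ ‖(u : B)‖ := mul_le_of_le_one_right (norm_nonneg _) hu_inv

variable {p : ℕ} [Fact p.Prime] [NormedAlgebra ℚ_[p] B]

theorem one_lt_prime_cast : (1 : ℝ) < p :=
  Nat.one_lt_cast.2 (Fact.out : p.Prime).one_lt

theorem norm_prime_zpow_smul (k : ℤ) (x : B) :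
    ‖(p : ℚ_[p]) ^ k • x‖ = (p : ℝ) ^ (-k) * ‖x‖ := by
  rw [norm_smul, norm_zpow, Padic.norm_p, inv_zpow']

theorem exists_norm_prime_zpow_smul_eq_one
    (hval : ∀ x : B, x ≠ 0 → ∃ n : ℤ, ‖x‖ = (p : ℝ) ^ n) {x : B} (hx : x ≠ 0) :
    ∃ n : ℤ, ‖(p : ℚ_[p]) ^ n • x‖ = 1 := by
  obtain ⟨n, hn⟩ := hval x hx
  refine ⟨n, ?_⟩
  rw [norm_prime_zpow_smul, hn, ← zpow_add₀ (zero_lt_one.trans one_lt_prime_cast).ne']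
  simp

theorem eq_of_prime_zpow_smul_eq_prime_zpow_smul {m m' : ℤ} {c c' : B} (hc : ‖c‖ = 1)
    (hc' : ‖c'‖ = 1) (h : (p : ℚ_[p]) ^ m • c = (p : ℚ_[p]) ^ m' • c') : m = m' ∧ c = c' := by
  have hp : (1 : ℝ) < p := one_lt_prime_cast
  have hm : m = m' := by
    have hnorm := congrArg norm h
    rw [norm_prime_zpow_smul, norm_prime_zpow_smul, hc, hc', mul_one, mul_one] at hnorm
    exact neg_injective (zpow_right_injective₀ (zero_lt_one.trans hp) hp.ne' hnorm)
  subst hm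
  have hpm : (p : ℚ_[p]) ^ m ≠ 0 :=
    zpow_ne_zero _ (Nat.cast_ne_zero.2 (Fact.out : p.Prime).ne_zero)
  exact ⟨rfl, (smul_right_injective B hpm) h⟩

theorem Units.norm_inv_le_one_of_norm_eq_one [NormOneClass B]
    (hval : ∀ x : B, x ≠ 0 → ∃ n : ℤ, ‖x‖ = (p : ℝ) ^ n)
    (hnzd : ∀ x y : B, ‖x‖ ≤ 1 → ‖y‖ ≤ 1 → ‖x * y‖ ≤ (p : ℝ)⁻¹ →
      ‖x‖ ≤ (p : ℝ)⁻¹ ∨ ‖y‖ ≤ (p : ℝ)⁻¹)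
    (u : Bˣ) (hu : ‖(u : B)‖ = 1) : ‖((u⁻¹ : Bˣ) : B)‖ ≤ 1 := by
  have hp : (1 : ℝ) < p := one_lt_prime_cast
  have := NormOneClass.nontrivial (G := B)
  obtain ⟨m, hm⟩ := hval _ (u⁻¹).ne_zero
  rw [hm]
  by_contra! hlt
  have hm_pos : 0 < m := (one_lt_zpow_iff_right₀ hp).1 hlt
  set y : B := (p : ℚ_[p]) ^ m • ((u⁻¹ : Bˣ) : B)
  have hy : ‖y‖ = 1 := by
    rw [norm_prime_zpow_smul, hm, ← zpow_add₀ (zero_lt_one.trans hp).ne']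
    simp
  have huy : ‖(u : B) * y‖ ≤ (p : ℝ)⁻¹ := by
    rw [mul_smul_comm, Units.mul_inv, norm_prime_zpow_smul, norm_one, mul_one, ← zpow_neg_one]
    exact zpow_le_zpow_right₀ hp.le (by omega)
  have hp_inv : (p : ℝ)⁻¹ < 1 := inv_lt_one_of_one_lt₀ hp
  rcases hnzd _ _ hu.le hy.le huy with h | h
  · exact (hu ▸ h).not_gt hp_inv
  · exact (hy ▸ h).not_gt hp_inv

theorem Units.norm_le_one_and_norm_inv_le_one_iff [NormOneClass B]
    (hval : ∀ x : B, x ≠ 0 → ∃ n : ℤ, ‖x‖ = (p : ℝ) ^ n)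
    (hnzd : ∀ x y : B, ‖x‖ ≤ 1 → ‖y‖ ≤ 1 → ‖x * y‖ ≤ (p : ℝ)⁻¹ →
      ‖x‖ ≤ (p : ℝ)⁻¹ ∨ ‖y‖ ≤ (p : ℝ)⁻¹)
    (u : Bˣ) : (‖(u : B)‖ ≤ 1 ∧ ‖((u⁻¹ : Bˣ) : B)‖ ≤ 1) ↔ ‖(u : B)‖ = 1 :=
  ⟨fun h ↦ u.norm_eq_one_of_norm_le_one_of_norm_inv_le_one h.1 h.2,
    fun h ↦ ⟨h.le, u.norm_inv_le_one_of_norm_eq_one hval hnzd h⟩⟩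

end

theorem stmt0_general (p : ℕ) [Fact p.Prime] (B : Type*) [NormedRing B] [NormedAlgebra ℚ_[p] B]
    [NormOneClass B]
    (hval : ∀ x : B, x ≠ 0 → ∃ n : ℤ, ‖x‖ = (p : ℝ) ^ n)
    (hnzd : ∀ x y : B, ‖x‖ ≤ 1 → ‖y‖ ≤ 1 → ‖x * y‖ ≤ (p : ℝ)⁻¹ →
      ‖x‖ ≤ (p : ℝ)⁻¹ ∨ ‖y‖ ≤ (p : ℝ)⁻¹) :
    ∀ b : Bˣ, ∃! z : ℤ × Bˣ,
      (‖((z.2 : Bˣ) : B)‖ ≤ 1 ∧ ‖((z.2⁻¹ : Bˣ) : B)‖ ≤ 1) ∧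
      (b : B) = ((p : ℚ_[p]) ^ z.1) • ((z.2 : Bˣ) : B) := by
  have := NormOneClass.nontrivial (G := B)
  intro b
  simp only [Units.norm_le_one_and_norm_inv_le_one_iff hval hnzd]
  obtain ⟨n, hn⟩ := exists_norm_prime_zpow_smul_eq_one hval b.ne_zero
  have hp : (p : ℚ_[p]) ≠ 0 := Nat.cast_ne_zero.2 (Fact.out : p.Prime).ne_zero
  have hpn : (p : ℚ_[p]) ^ n ≠ 0 := zpow_ne_zero n hp
  set a : Bˣ := Units.mk0 _ hpn • b
  have ha : (a : B) = (p : ℚ_[p]) ^ n • (b : B) := by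
    rw [Units.val_smul, Units.smul_def, Units.val_mk0]
  have hb : (b : B) = (p : ℚ_[p]) ^ (-n) • (a : B) := by
    rw [ha, smul_smul, ← zpow_add₀ hp]
    simp
  refine ⟨(-n, a), ⟨ha ▸ hn, hb⟩, ?_⟩
  rintro ⟨m, c⟩ ⟨hc, hbc⟩
  obtain ⟨rfl, hca⟩ := eq_of_prime_zpow_smul_eq_prime_zpow_smul hc (ha ▸ hn) (hbc.symm.trans hb)
  exact Prod.ext rfl (Units.ext hca)

/-- Let `B` be a `p`-adic Banach algebra over `ℚ_p` whose norm takes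
values in `p^ℤ ∪ {0}`, and let `A = {b : ‖b‖ ≤ 1}` be its unit ball. If the residue
algebra `A/pA` has no zero divisors (expressed: if a product of two elements of `A`
lies in `pA = {‖·‖ ≤ p⁻¹}` then one of the factors does), then every unit of `B` is
uniquely of the form `p^n • a` with `n : ℤ` and `a` a unit of `A` (i.e. a unit of `B`
such that both `a` and `a⁻¹` have norm `≤ 1`). In particular `B^* = p^ℤ·A^*` and
`p^ℤ ∩ A^* = 1`. -/
theorem stmt0 (p : ℕ) [Fact p.Prime] (B : Type*) [NormedRing B] [NormedAlgebra ℚ_[p] B]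
    [CompleteSpace B] [NormOneClass B] [IsUltrametricDist B]
    (hval : ∀ x : B, x ≠ 0 → ∃ n : ℤ, ‖x‖ = (p : ℝ) ^ n)
    (hnzd : ∀ x y : B, ‖x‖ ≤ 1 → ‖y‖ ≤ 1 → ‖x * y‖ ≤ (p : ℝ)⁻¹ →
      ‖x‖ ≤ (p : ℝ)⁻¹ ∨ ‖y‖ ≤ (p : ℝ)⁻¹) :
    ∀ b : Bˣ, ∃! z : ℤ × Bˣ,
      (‖((z.2 : Bˣ) : B)‖ ≤ 1 ∧ ‖((z.2⁻¹ : Bˣ) : B)‖ ≤ 1) ∧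
      (b : B) = ((p : ℚ_[p]) ^ z.1) • ((z.2 : Bˣ) : B) :=
  stmt0_general p B hval hnzd
end

section
/- For a countable discrete group Γ, the residue ring c₀(Γ,ℤ_p)/p·c₀(Γ,ℤ_p) is isomorphic as an 𝔽_p-algebra to the group ring 𝔽_p[Γ]. -/
open PadicInt

private lemma aux_isClosed_dvd (p : ℕ) [Fact p.Prime] :
    IsClosed {z : ℤ_[p] | (p:ℤ_[p]) ∣ z} := by
  have : {z : ℤ_[p] | (p:ℤ_[p]) ∣ z} = {z | ‖z‖ ≤ (p:ℝ)^(-1:ℤ)} := by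
    ext z
    rw [Set.mem_setOf_eq, Set.mem_setOf_eq, ← norm_lt_one_iff_dvd,
      PadicInt.norm_le_pow_iff_norm_lt_pow_add_one]
    norm_num
  rw [this]
  exact isClosed_le (by continuity) continuous_const

private lemma aux_dvd_hasSum {p : ℕ} [Fact p.Prime] {ι : Type*} {u : ι → ℤ_[p]} {t : ℤ_[p]}
    (h : HasSum u t) (hd : ∀ x, (p:ℤ_[p]) ∣ u x) : (p:ℤ_[p]) ∣ t := by
  have := (aux_isClosed_dvd p).mem_of_tendsto h
    (Filter.Eventually.of_forall fun s => Finset.dvd_sum fun x _ => hd x)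
  exact this

private lemma aux_toZMod_eq_zero_iff {p : ℕ} [Fact p.Prime] (x : ℤ_[p]) :
    PadicInt.toZMod x = 0 ↔ (p:ℤ_[p]) ∣ x := by
  rw [← RingHom.mem_ker, ker_toZMod, maximalIdeal_eq_span_p, Ideal.mem_span_singleton]

private lemma aux_toZMod_hasSum {p : ℕ} [Fact p.Prime] {ι : Type*} [DecidableEq ι]
    {f : ι → ℤ_[p]} {s : ℤ_[p]} (h : HasSum f s) (T : Finset ι)
    (hT : ∀ x ∉ T, PadicInt.toZMod (f x) = 0) :
    PadicInt.toZMod s = ∑ x ∈ T, PadicInt.toZMod (f x) := by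
  have hg : HasSum (fun x => if x ∈ T then f x else 0) (∑ x ∈ T, f x) := by
    have h1 : HasSum (fun x => if x ∈ T then f x else 0) (∑ x ∈ T, (if x ∈ T then f x else 0)) :=
      hasSum_sum_of_ne_finset_zero (s := T)
      (f := fun x => if x ∈ T then f x else 0) (fun b hb => if_neg hb)
    have heq : ∑ x ∈ T, (if x ∈ T then f x else 0) = ∑ x ∈ T, f x :=
      Finset.sum_congr rfl fun x hx => if_pos hx
    rwa [heq] at h1
  have hsub := h.sub hg
  have hdvd : (p:ℤ_[p]) ∣ (s - ∑ x ∈ T, f x) := by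
    apply aux_dvd_hasSum hsub
    intro x
    by_cases hx : x ∈ T
    · simp [hx]
    · simpa [hx] using (aux_toZMod_eq_zero_iff (f x)).1 (hT x hx)
  have : PadicInt.toZMod (s - ∑ x ∈ T, f x) = 0 := (aux_toZMod_eq_zero_iff _).2 hdvd
  rw [map_sub, sub_eq_zero] at this
  rw [this, map_sum]

/-- For a countable discrete group `Γ`, the residue ring
`c₀(Γ,ℤ_p)/p·c₀(Γ,ℤ_p)` is isomorphic as an `𝔽_p`-algebra to the group ring `𝔽_p[Γ]`.
Here `c₀(Γ,ℤ_p)` is presented as a ring `R` whose underlying set is identified with the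
set of `ℤ_p`-valued functions on `Γ` vanishing at infinity, in such a way that addition
is pointwise, multiplication is convolution and the unit is `δ_e`.  The quotient `R/pR`
is presented by a quotient map: there is a surjective ring homomorphism
`R →+* 𝔽_p[Γ]` whose kernel is exactly `pR` (any ring homomorphism between
`𝔽_p`-algebras is automatically `𝔽_p`-linear, so this is an `𝔽_p`-algebra
isomorphism `R/pR ≅ 𝔽_p[Γ]`). -/
theorem stmt5 (p : ℕ) [Fact p.Prime] (Γ : Type*) [Group Γ] [Countable Γ] [DecidableEq Γ]
    (R : Type*) [Ring R]
    (φ : R ≃ {x : Γ → ℤ_[p] // ∀ ε > (0:ℝ), {γ | ε ≤ ‖x γ‖}.Finite})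
    (hadd : ∀ a b : R, ∀ γ : Γ, (φ (a + b)).1 γ = (φ a).1 γ + (φ b).1 γ)
    (hmul : ∀ a b : R, ∀ γ : Γ,
      HasSum (fun γ' => (φ a).1 γ' * (φ b).1 (γ'⁻¹ * γ)) ((φ (a * b)).1 γ))
    (hone : ∀ γ : Γ, (φ 1).1 γ = if γ = 1 then 1 else 0) :
    ∃ ψ : R →+* MonoidAlgebra (ZMod p) Γ,
      Function.Surjective ψ ∧ ∀ a : R, ψ a = 0 ↔ ∃ b : R, a = p * b := by
  classical
  -- finiteness of mod-p support
  have hfin : ∀ a : R, {γ : Γ | PadicInt.toZMod ((φ a).1 γ) ≠ 0}.Finite := by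
    intro a
    apply ((φ a).2 1 one_pos).subset
    intro γ hγ
    simp only [Set.mem_setOf_eq] at hγ ⊢
    by_contra h
    push_neg at h
    exact hγ ((aux_toZMod_eq_zero_iff _).2 ((norm_lt_one_iff_dvd _).1 h))
  -- the underlying function
  set F : R → MonoidAlgebra (ZMod p) Γ := fun a =>
    .ofCoeff ⟨(hfin a).toFinset, fun γ => PadicInt.toZMod ((φ a).1 γ), by
      intro γ; simp [Set.Finite.mem_toFinset]⟩ with hF
  have hFapp : ∀ a γ, (F a).coeff γ = PadicInt.toZMod ((φ a).1 γ) := fun a γ => rfl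
  have hzero : ∀ γ, (φ (0:R)).1 γ = 0 := by
    intro γ
    have := hadd 0 0 γ
    rw [add_zero] at this
    exact left_eq_add.mp this
  -- ψ as a ring hom
  have hFmul : ∀ a b : R, F (a * b) = F a * F b := by
    intro a b
    ext γ
    rw [hFapp, MonoidAlgebra.coeff_mul_apply_left, Finsupp.sum,
      aux_toZMod_hasSum (hmul a b γ) (F a).coeff.support ?_]
    · apply Finset.sum_congr rfl
      intro x _
      rw [map_mul, hFapp, hFapp]
    · intro x hx
      have : (F a).coeff x = 0 := Finsupp.notMem_support_iff.1 hx
      rw [hFapp] at this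
      rw [map_mul, this, zero_mul]
  refine ⟨{ toFun := F
            map_one' := ?_
            map_mul' := hFmul
            map_zero' := ?_
            map_add' := ?_ }, ?_, ?_⟩
  · -- map_one
    ext γ
    rw [hFapp, hone γ, MonoidAlgebra.one_def, MonoidAlgebra.coeff_single]
    rw [Finsupp.single_apply]
    by_cases h : γ = 1 <;> simp [h, eq_comm]
  · -- map_zero
    ext γ
    rw [hFapp, hzero γ, map_zero]
    rfl
  · -- map_add
    intro a b
    ext γ
    rw [MonoidAlgebra.coeff_add, Finsupp.add_apply, hFapp, hFapp, hFapp, hadd a b γ, map_add]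
  · -- surjectivity
    intro f
    have hsupp : ∀ ε > (0:ℝ), {γ | ε ≤ ‖(((f.coeff γ).val : ℤ_[p]))‖}.Finite := by
      intro ε hε
      apply f.coeff.support.finite_toSet.subset
      intro γ hγ
      simp only [Set.mem_setOf_eq] at hγ
      by_contra h
      have : f.coeff γ = 0 := Finsupp.notMem_support_iff.1 (by simpa using h)
      rw [this] at hγ
      simp at hγ
      linarith
    refine ⟨φ.symm ⟨fun γ => ((f.coeff γ).val : ℤ_[p]), hsupp⟩, ?_⟩
    ext γ
    show (F _).coeff γ = f.coeff γ
    rw [hFapp, Equiv.apply_symm_apply]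
    show PadicInt.toZMod (((f.coeff γ).val : ℤ_[p])) = f.coeff γ
    rw [map_natCast]
    exact ZMod.natCast_rightInverse (f.coeff γ)
  · -- kernel
    intro a
    -- key: φ of natural multiples
    have hnat : ∀ (n : ℕ) (b : R) (γ : Γ), (φ ((n : R) * b)).1 γ = (n : ℤ_[p]) * (φ b).1 γ := by
      intro n
      induction n with
      | zero => intro b γ; simp [hzero]
      | succ n ih =>
        intro b γ
        have : ((n + 1 : ℕ) : R) * b = (n : R) * b + b := by push_cast; rw [add_mul, one_mul]
        rw [this, hadd, ih]
        push_cast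
        ring
    constructor
    · intro h
      have hdvd : ∀ γ, (p:ℤ_[p]) ∣ (φ a).1 γ := by
        intro γ
        apply (aux_toZMod_eq_zero_iff _).1
        have : (F a).coeff γ = 0 := by rw [show F a = 0 from h]; rfl
        rwa [hFapp] at this
      choose c hc using hdvd
      have hcfin : ∀ ε > (0:ℝ), {γ | ε ≤ ‖c γ‖}.Finite := by
        intro ε hε
        have hp0 : (0:ℝ) < (p:ℝ)⁻¹ := by
          have := (Fact.out : p.Prime).pos
          positivity
        apply ((φ a).2 (ε * (p:ℝ)⁻¹) (by positivity)).subset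
        intro γ hγ
        simp only [Set.mem_setOf_eq] at hγ ⊢
        rw [hc γ, norm_mul, PadicInt.norm_p]
        calc ε * (p:ℝ)⁻¹ ≤ ‖c γ‖ * (p:ℝ)⁻¹ := by
              apply mul_le_mul_of_nonneg_right hγ (le_of_lt hp0)
          _ = (p:ℝ)⁻¹ * ‖c γ‖ := by ring
      refine ⟨φ.symm ⟨c, hcfin⟩, ?_⟩
      apply φ.injective
      apply Subtype.ext
      funext γ
      rw [hnat p, Equiv.apply_symm_apply]
      exact hc γ
    · rintro ⟨b, rfl⟩
      ext γ
      show (F _).coeff γ = 0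
      rw [hFapp, hnat p b γ, map_mul, map_natCast]
      simp [ZMod.natCast_self]
end

section
/- Let P(t) = a_m t^m + ... + a_r t^r ∈ ℂ_p[t] with a_m, a_r ≠ 0, whose roots α all satisfy |α|_p ≠ 1. Then the p-adic Mahler measure m_p(P) = Shnirelman integral of log_p P over the p-adic unit circle satisfies m_p(P) = log_p a_r − Σ_{0<|α|_p<1} log_p α = log_p a_m + Σ_{|α|_p>1} log_p α. -/
open Polynomial Filter IsUltrametricDist

section Aux

variable {K : Type*} [NormedField K] [IsUltrametricDist K]

lemma aux_norm_nat_coprime {p : ℕ} (hp : p.Prime) (hplt : ‖(p : K)‖ < 1) {n : ℕ}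
    (h : n.Coprime p) : ‖(n : K)‖ = 1 := by
  refine le_antisymm (norm_natCast_le_one K n) (not_lt.mp fun hlt => ?_)
  obtain ⟨u, v, huv⟩ := Nat.isCoprime_iff_coprime.mpr h
  have h1 : ((u : K) * n + v * p) = 1 := by exact_mod_cast congrArg (fun z : ℤ => (z : K)) huv
  have h2 := norm_add_le_max ((u : K) * (n : K)) ((v : K) * (p : K))
  rw [h1, norm_one] at h2
  have hu : ‖(u : K) * (n : K)‖ ≤ ‖(n : K)‖ := by
    rw [norm_mul]
    exact mul_le_of_le_one_left (norm_nonneg _) (norm_intCast_le_one K u)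
  have hv : ‖(v : K) * (p : K)‖ ≤ ‖(p : K)‖ := by
    rw [norm_mul]
    exact mul_le_of_le_one_left (norm_nonneg _) (norm_intCast_le_one K v)
  rcases max_cases ‖(u : K) * (n : K)‖ ‖(v : K) * (p : K)‖ with ⟨he, _⟩ | ⟨he, _⟩ <;>
    rw [he] at h2 <;> linarith

lemma aux_norm_nat_ge {p : ℕ} (hp : p.Prime) (hpnorm : ‖(p : K)‖ = (p : ℝ)⁻¹) (n : ℕ)
    (hn : n ≠ 0) : ((n : ℝ))⁻¹ ≤ ‖(n : K)‖ := by
  have hplt : ‖(p : K)‖ < 1 := by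
    rw [hpnorm, inv_lt_one_iff₀]
    right
    exact_mod_cast hp.one_lt
  set k := n.factorization p with hk
  have hd : p ^ k * (n / p ^ k) = n := Nat.ordProj_mul_ordCompl_eq_self n p
  have hcop : (n / p ^ k).Coprime p := (Nat.coprime_ordCompl hp hn).symm
  have hnorm : ‖(n : K)‖ = ((p : ℝ))⁻¹ ^ k := by
    rw [← hd]
    push_cast
    rw [norm_mul, norm_pow, hpnorm, aux_norm_nat_coprime hp hplt hcop, mul_one]
  have hle : (p : ℝ) ^ k ≤ (n : ℝ) := by
    exact_mod_cast Nat.le_of_dvd (Nat.pos_of_ne_zero hn) (Nat.ordProj_dvd n p)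
  rw [hnorm, inv_pow]
  have hp0 : (0 : ℝ) < (p : ℝ) := by exact_mod_cast hp.pos
  have hppos : (0 : ℝ) < (p : ℝ) ^ k := by positivity
  exact inv_anti₀ hppos hle

/-- Sum of a multiset-indexed family of functions tending to zero tends to zero. -/
lemma aux_tendsto_multiset_sum {ι : Type*} (m : Multiset ι) (f : ι → ℕ → K) (l : Filter ℕ)
    (h : ∀ a ∈ m, Tendsto (f a) l (nhds 0)) :
    Tendsto (fun N => (m.map fun a => f a N).sum) l (nhds 0) := by
  induction m using Multiset.induction with
  | empty => simpa using tendsto_const_nhds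
  | cons a s ih =>
    have h1 : Tendsto (fun N => f a N + (s.map fun b => f b N).sum) l (nhds (0 + 0)) :=
      (h a (Multiset.mem_cons_self a s)).add (ih fun b hb => h b (Multiset.mem_cons_of_mem hb))
    simpa using h1

lemma aux_multiset_sum_swap {β γ : Type*} (T : Finset β) (m : Multiset γ) (g : β → γ → K) :
    ∑ z ∈ T, (m.map (g z)).sum = (m.map fun a => ∑ z ∈ T, g z a).sum := by
  induction m using Multiset.induction with
  | empty => simp
  | cons a s ih => simp [Finset.sum_add_distrib, ih]

lemma aux_multiset_sum_ite (m : Multiset K) (c : K → Prop) [DecidablePred c] (f : K → K) :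
    (m.map fun a => if c a then f a else 0).sum = ((m.filter c).map f).sum := by
  induction m using Multiset.induction with
  | empty => simp
  | cons a s ih =>
    by_cases h : c a <;> simp [Multiset.filter_cons, h, ih]

lemma aux_multiset_prod_ite {R : Type*} [CommMonoid R] (m : Multiset K) (c : K → Prop)
    [DecidablePred c] (f : K → R) :
    (m.map fun a => if c a then f a else 1).prod = ((m.filter c).map f).prod := by
  induction m using Multiset.induction with
  | empty => simp
  | cons a s ih =>
    by_cases h : c a <;> simp [Multiset.filter_cons, h, ih]

lemma aux_trailing_multiset_prod {R : Type*} [CommRing R] [NoZeroDivisors R]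
    (m : Multiset R[X]) : m.prod.trailingCoeff = (m.map Polynomial.trailingCoeff).prod := by
  induction m using Multiset.induction with
  | empty =>
    simp [Polynomial.trailingCoeff, Polynomial.natTrailingDegree_one]
  | cons a s ih => simp [Polynomial.trailingCoeff_mul, ih]

end Aux

section LogAux

variable {K : Type*} [NormedField K] (Logp : K → K)
variable (hhom : ∀ x y : K, x ≠ 0 → y ≠ 0 → Logp (x * y) = Logp x + Logp y)

include hhom

lemma aux_log_one : Logp 1 = 0 := by
  have h := hhom 1 1 one_ne_zero one_ne_zero
  rw [mul_one] at h
  nth_rewrite 1 [← add_zero (Logp 1)] at h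
  exact (add_left_cancel h).symm

lemma aux_log_pow (x : K) (hx : x ≠ 0) (n : ℕ) : Logp (x ^ n) = (n : K) * Logp x := by
  induction n with
  | zero => simpa using aux_log_one Logp hhom
  | succ n ih =>
    rw [pow_succ, hhom _ _ (pow_ne_zero _ hx) hx, ih]
    push_cast
    ring

lemma aux_log_neg_one [CharZero K] : Logp (-1 : K) = 0 := by
  have h := hhom (-1) (-1) (by norm_num) (by norm_num)
  rw [neg_mul_neg, one_mul, aux_log_one Logp hhom] at h
  have := add_self_eq_zero.mp h.symm
  exact this

lemma aux_log_neg [CharZero K] (x : K) (hx : x ≠ 0) : Logp (-x) = Logp x := by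
  have h := hhom (-1) x (by norm_num) hx
  rw [neg_one_mul] at h
  rw [h, aux_log_neg_one Logp hhom, zero_add]

lemma aux_log_multiset (m : Multiset K) (h : ∀ x ∈ m, x ≠ 0) :
    Logp m.prod = (m.map Logp).sum := by
  induction m using Multiset.induction with
  | empty => simpa using aux_log_one Logp hhom
  | cons a s ih =>
    have ha : a ≠ 0 := h a (Multiset.mem_cons_self a s)
    have hs : ∀ x ∈ s, x ≠ 0 := fun x hx => h x (Multiset.mem_cons_of_mem hx)
    have hsp : s.prod ≠ 0 := Multiset.prod_ne_zero fun h0 => hs 0 h0 rfl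
    rw [Multiset.prod_cons, hhom _ _ ha hsp, ih hs, Multiset.map_cons, Multiset.sum_cons]

lemma aux_log_finset_prod {ι : Type*} (s : Finset ι) (f : ι → K) (h : ∀ i ∈ s, f i ≠ 0) :
    Logp (∏ i ∈ s, f i) = ∑ i ∈ s, Logp (f i) := by
  classical
  induction s using Finset.induction with
  | empty => simpa using aux_log_one Logp hhom
  | insert a t hnotmem ih =>
    have ha : f a ≠ 0 := h a (Finset.mem_insert_self a t)
    have ht : ∀ i ∈ t, f i ≠ 0 := fun i hi => h i (Finset.mem_insert_of_mem hi)
    have htp : ∏ i ∈ t, f i ≠ 0 := Finset.prod_ne_zero_iff.mpr ht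
    rw [Finset.prod_insert hnotmem, hhom _ _ ha htp, ih ht, Finset.sum_insert hnotmem]

end LogAux

lemma aux_log_bound {K : Type*} [NormedField K] [IsUltrametricDist K] {p : ℕ} (hp : p.Prime)
    (hpnorm : ‖(p : K)‖ = (p : ℝ)⁻¹) (Logp : K → K)
    (hser : ∀ x : K, ‖x - 1‖ < 1 →
      HasSum (fun ν : ℕ => (-1) ^ ν * (x - 1) ^ (ν + 1) / ((ν : K) + 1)) (Logp x))
    (x : K) (hx : ‖x - 1‖ ≤ 1 / 2) : ‖Logp x‖ ≤ 2 * ‖x - 1‖ := by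
  have h := hser x (lt_of_le_of_lt hx (by norm_num))
  have hb : ∀ ν : ℕ, ‖(-1 : K) ^ ν * (x - 1) ^ (ν + 1) / ((ν : K) + 1)‖ ≤ 2 * ‖x - 1‖ := by
    intro ν
    have hcast : ((ν : K) + 1) = ((ν + 1 : ℕ) : K) := by push_cast; ring
    have hd : ((ν + 1 : ℕ) : ℝ)⁻¹ ≤ ‖((ν + 1 : ℕ) : K)‖ :=
      aux_norm_nat_ge hp hpnorm (ν + 1) (Nat.succ_ne_zero ν)
    have hinv : ‖((ν + 1 : ℕ) : K)‖⁻¹ ≤ ((ν + 1 : ℕ) : ℝ) := by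
      rw [← inv_inv (((ν + 1 : ℕ) : ℝ))]
      exact inv_anti₀ (by positivity) hd
    rw [norm_div, norm_mul, norm_pow, norm_neg, norm_one, one_pow, one_mul, norm_pow, hcast,
      div_eq_mul_inv]
    calc ‖x - 1‖ ^ (ν + 1) * ‖((ν + 1 : ℕ) : K)‖⁻¹
        ≤ ‖x - 1‖ ^ (ν + 1) * ((ν + 1 : ℕ) : ℝ) :=
          mul_le_mul_of_nonneg_left hinv (by positivity)
      _ = ‖x - 1‖ * (‖x - 1‖ ^ ν * ((ν + 1 : ℕ) : ℝ)) := by ring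
      _ ≤ ‖x - 1‖ * ((1 / 2) ^ ν * ((ν + 1 : ℕ) : ℝ)) := by
          apply mul_le_mul_of_nonneg_left _ (norm_nonneg _)
          exact mul_le_mul_of_nonneg_right (pow_le_pow_left₀ (norm_nonneg _) hx ν) (by positivity)
      _ ≤ ‖x - 1‖ * 2 := by
          apply mul_le_mul_of_nonneg_left _ (norm_nonneg _)
          have h2 : ((ν + 1 : ℕ) : ℝ) ≤ 2 ^ (ν + 1) := by
            exact_mod_cast (ν + 1).lt_two_pow_self.le
          have h3 : (1 / 2 : ℝ) ^ ν * 2 ^ (ν + 1) = 2 := by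
            rw [pow_succ, ← mul_assoc, ← mul_pow]
            norm_num
          calc (1 / 2 : ℝ) ^ ν * ((ν + 1 : ℕ) : ℝ)
              ≤ (1 / 2) ^ ν * 2 ^ (ν + 1) := mul_le_mul_of_nonneg_left h2 (by positivity)
            _ = 2 := h3
      _ = 2 * ‖x - 1‖ := by ring
  have hsum : ∀ s : Finset ℕ,
      ‖∑ ν ∈ s, (-1 : K) ^ ν * (x - 1) ^ (ν + 1) / ((ν : K) + 1)‖ ≤ 2 * ‖x - 1‖ :=
    fun s => norm_sum_le_of_forall_le_of_nonneg (by positivity) fun i _ => hb i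
  exact le_of_tendsto' (Filter.Tendsto.norm h) hsum

/-- Let `K` be (a model of) `ℂ_p`: an algebraically closed complete
nonarchimedean normed field of characteristic zero with `‖p‖ = p⁻¹`, and let
`Logp : K → K` be the Iwasawa branch of the `p`-adic logarithm: a homomorphism on
`K^*` with `Logp p = 0` agreeing with the usual logarithm series on the open unit ball
around `1`.  Let `P(t) = a_m t^m + … + a_r t^r ∈ K[t]` with `a_m, a_r ≠ 0` (i.e.
`P ≠ 0`, `a_m` its leading and `a_r` its trailing coefficient) whose roots `α` all
satisfy `|α|_p ≠ 1`.  Then the `p`-adic Mahler measure, i.e. the Shnirelman integral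
`m_p(P) = lim_{N→∞,(N,p)=1} (1/N) Σ_{ζ^N=1} Logp(P(ζ))`, exists and satisfies
`m_p(P) = Logp a_r − Σ_{0<|α|<1} Logp α = Logp a_m + Σ_{|α|>1} Logp α`
(roots counted with multiplicity). -/
theorem stmt10 (p : ℕ) [Fact p.Prime] (K : Type*) [NormedField K] [DecidableEq K] [CompleteSpace K]
    [IsAlgClosed K] [CharZero K] [IsUltrametricDist K]
    (hp : ‖(p : K)‖ = (p : ℝ)⁻¹)
    (Logp : K → K)
    (hhom : ∀ x y : K, x ≠ 0 → y ≠ 0 → Logp (x * y) = Logp x + Logp y)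
    (hlogp : Logp (p : K) = 0)
    (hser : ∀ x : K, ‖x - 1‖ < 1 →
      HasSum (fun ν : ℕ => (-1) ^ ν * (x - 1) ^ (ν + 1) / ((ν : K) + 1)) (Logp x))
    (P : Polynomial K) (hP : P ≠ 0)
    (hroots : ∀ α ∈ P.roots, ‖α‖ ≠ 1) :
    Filter.Tendsto
      (fun N : ℕ =>
        (N : K)⁻¹ * ∑ ζ ∈ (Polynomial.nthRoots N (1 : K)).toFinset, Logp (P.eval ζ))
      (Filter.atTop ⊓ Filter.principal {N | N.Coprime p})
      (nhds (Logp P.trailingCoeff -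
        ((P.roots.filter fun α => 0 < ‖α‖ ∧ ‖α‖ < 1).map Logp).sum)) ∧
    Logp P.trailingCoeff - ((P.roots.filter fun α => 0 < ‖α‖ ∧ ‖α‖ < 1).map Logp).sum =
      Logp P.leadingCoeff + ((P.roots.filter fun α => 1 < ‖α‖).map Logp).sum := by
  have hprime : p.Prime := Fact.out
  have hplt : ‖(p : K)‖ < 1 := by
    rw [hp, inv_lt_one_iff₀]; right; exact_mod_cast hprime.one_lt
  have hlead0 : P.leadingCoeff ≠ 0 := leadingCoeff_ne_zero.mpr hP
  set R := P.roots with hRdef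
  have hsplit : P = C P.leadingCoeff * (R.map fun a => X - C a).prod :=
    (IsAlgClosed.splits P).eq_prod_roots
  -- Part 2 : the algebraic identity
  have hfilters : (R.filter fun α => 0 < ‖α‖ ∧ ‖α‖ < 1) + (R.filter fun α => 1 < ‖α‖)
      = R.filter (fun a => a ≠ 0) := by
    rw [Multiset.filter_add_filter]
    have h1 : (R.filter fun a => (0 < ‖a‖ ∧ ‖a‖ < 1) ∧ 1 < ‖a‖) = 0 :=
      Multiset.filter_eq_nil.mpr fun a _ h => absurd h.1.2 (not_lt.mpr h.2.le)
    rw [h1, add_zero]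
    refine Multiset.filter_congr fun a ha => ?_
    have hna := hroots a ha
    constructor
    · rintro (⟨h0, _⟩ | h1)
      · exact norm_pos_iff.mp h0
      · intro h; rw [h, norm_zero] at h1; linarith
    · intro h0
      rcases lt_or_gt_of_ne hna with hlt | hgt
      · exact Or.inl ⟨norm_pos_iff.mpr h0, hlt⟩
      · exact Or.inr hgt
  have key2 : Logp P.trailingCoeff
      = Logp P.leadingCoeff + ((R.filter fun a => a ≠ 0).map Logp).sum := by
    have htc : P.trailingCoeff
        = P.leadingCoeff * ((R.filter fun a => a ≠ 0).map fun a => -a).prod := by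
      conv_lhs => rw [hsplit]
      rw [trailingCoeff_mul, aux_trailing_multiset_prod, Multiset.map_map]
      have hC : (C P.leadingCoeff).trailingCoeff = P.leadingCoeff := by
        simp [Polynomial.trailingCoeff, Polynomial.natTrailingDegree_C]
      rw [hC]
      congr 1
      have hmap : R.map (Polynomial.trailingCoeff ∘ fun a => X - C a)
          = R.map fun a => if a ≠ 0 then -a else 1 := by
        refine Multiset.map_congr rfl fun a _ => ?_
        by_cases ha : a = 0
        · subst ha
          simp [Polynomial.trailingCoeff, Polynomial.natTrailingDegree_X]
        · have hcz : (X - C a).coeff 0 = -a := by simp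
          have hnt : (X - C a).natTrailingDegree = 0 :=
            Polynomial.natTrailingDegree_eq_zero.mpr (Or.inr (by rw [hcz]; simpa using ha))
          simp [Polynomial.trailingCoeff, hnt, hcz, ha]
      rw [hmap, aux_multiset_prod_ite]
    rw [htc, hhom _ _ hlead0, aux_log_multiset Logp hhom]
    · congr 1
      rw [Multiset.map_map]
      refine congrArg Multiset.sum (Multiset.map_congr rfl fun a ha => ?_)
      exact aux_log_neg Logp hhom a (Multiset.mem_filter.mp ha).2
    · intro x hx
      rw [Multiset.mem_map] at hx
      obtain ⟨a, ha, rfl⟩ := hx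
      simpa using (Multiset.mem_filter.mp ha).2
    · refine Multiset.prod_ne_zero fun h0 => ?_
      rw [Multiset.mem_map] at h0
      obtain ⟨a, ha, h⟩ := h0
      exact (Multiset.mem_filter.mp ha).2 (by simpa [neg_eq_zero] using h.symm)
  have part2 : Logp P.trailingCoeff
        - ((R.filter fun α => 0 < ‖α‖ ∧ ‖α‖ < 1).map Logp).sum
      = Logp P.leadingCoeff + ((R.filter fun α => 1 < ‖α‖).map Logp).sum := by
    rw [key2, ← hfilters, Multiset.map_add, Multiset.sum_add]
    ring
  refine ⟨?_, part2⟩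
  rw [part2]
  -- Part 1 : the limit
  set filt := (atTop ⊓ 𝓟 {N | N.Coprime p} : Filter ℕ) with hfilt
  set err : ℕ → K → K := fun N a => Logp (1 - (if 1 < ‖a‖ then a⁻¹ else a) ^ N) with herrdef
  set Lfin := Logp P.leadingCoeff + ((R.filter fun α => 1 < ‖α‖).map Logp).sum with hLfin
  have hMain : ∀ N : ℕ, 0 < N →
      (N : K)⁻¹ * ∑ ζ ∈ (nthRoots N (1 : K)).toFinset, Logp (P.eval ζ)
        = Lfin + (N : K)⁻¹ * (R.map (err N)).sum := by
    intro N hN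
    have hNK : ((N : ℕ) : K) ≠ 0 := Nat.cast_ne_zero.mpr hN.ne'
    haveI : NeZero ((N : ℕ) : K) := ⟨hNK⟩
    obtain ⟨ζ₀, hζ₀⟩ := HasEnoughRootsOfUnity.exists_primitiveRoot K N
    have hT : (nthRoots N (1 : K)).toFinset = nthRootsFinset N (1 : K) := (nthRootsFinset_def N (1 : K)).symm
    have hcard : (nthRoots N (1 : K)).toFinset.card = N := by
      rw [hT]; exact hζ₀.card_nthRootsFinset
    have hprodeval : ∀ a : K, ∏ ζ ∈ (nthRoots N (1 : K)).toFinset, (a - ζ) = a ^ N - 1 := by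
      intro a
      have h1 := congrArg (Polynomial.eval a) (Polynomial.X_pow_sub_one_eq_prod hN hζ₀)
      rw [hT]
      simpa [Polynomial.eval_prod] using h1.symm
    have hζ1 : ∀ ζ ∈ (nthRoots N (1 : K)).toFinset, ‖ζ‖ = 1 := by
      intro ζ hζ
      rw [Multiset.mem_toFinset, mem_nthRoots hN] at hζ
      have h1 : ‖ζ‖ ^ N = 1 := by rw [← norm_pow, hζ, norm_one]
      by_contra hne
      rcases lt_or_gt_of_ne hne with hlt | hgt
      · exact absurd h1 (pow_lt_one₀ (norm_nonneg _) hlt hN.ne').ne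
      · exact absurd h1 (one_lt_pow₀ hgt hN.ne').ne'
    have hζroot : ∀ ζ ∈ (nthRoots N (1 : K)).toFinset, ∀ a ∈ R, ζ - a ≠ 0 := by
      intro ζ hζ a ha h
      have hza : ζ = a := sub_eq_zero.mp h
      exact hroots a ha (hza ▸ hζ1 ζ hζ)
    have hstep1 : ∀ ζ ∈ (nthRoots N (1 : K)).toFinset,
        Logp (P.eval ζ) = Logp P.leadingCoeff + (R.map fun a => Logp (ζ - a)).sum := by
      intro ζ hζ
      have heval : P.eval ζ = P.leadingCoeff * (R.map fun a => ζ - a).prod := by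
        conv_lhs => rw [hsplit]
        rw [eval_mul, eval_C, eval_multiset_prod, Multiset.map_map]
        refine congrArg (P.leadingCoeff * ·) (congrArg Multiset.prod ?_)
        exact Multiset.map_congr rfl fun a _ => by simp
      have hz : ∀ x ∈ R.map fun a => ζ - a, x ≠ 0 := by
        intro x hx
        rw [Multiset.mem_map] at hx
        obtain ⟨a, ha, rfl⟩ := hx
        exact hζroot ζ hζ a ha
      have hz2 : (R.map fun a => ζ - a).prod ≠ 0 :=
        Multiset.prod_ne_zero fun h0 => hz 0 h0 rfl
      rw [heval, hhom _ _ hlead0 hz2, aux_log_multiset Logp hhom _ hz, Multiset.map_map]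
      rfl
    have hinner : ∀ a ∈ R, ∑ ζ ∈ (nthRoots N (1 : K)).toFinset, Logp (ζ - a)
        = (if 1 < ‖a‖ then (N : K) * Logp a else 0) + err N a := by
      intro a ha
      have hna := hroots a ha
      have hpowne : ‖a‖ ^ N ≠ 1 := by
        rcases lt_or_gt_of_ne hna with hlt | hgt
        · exact (pow_lt_one₀ (norm_nonneg _) hlt hN.ne').ne
        · exact (one_lt_pow₀ hgt hN.ne').ne'
      have haN : a ^ N - 1 ≠ 0 := by
        intro h
        have h4 : a ^ N = 1 := sub_eq_zero.mp h
        have h5 : ‖a‖ ^ N = 1 := by rw [← norm_pow, h4, norm_one]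
        exact hpowne h5
      have h1 : ∑ ζ ∈ (nthRoots N (1 : K)).toFinset, Logp (ζ - a)
          = Logp (∏ ζ ∈ (nthRoots N (1 : K)).toFinset, (ζ - a)) :=
        (aux_log_finset_prod Logp hhom _ _ fun ζ hζ => hζroot ζ hζ a ha).symm
      have h2 : ∏ ζ ∈ (nthRoots N (1 : K)).toFinset, (ζ - a) = (-1) ^ N * (a ^ N - 1) := by
        have h3 : ∏ ζ ∈ (nthRoots N (1 : K)).toFinset, (ζ - a)
            = ∏ ζ ∈ (nthRoots N (1 : K)).toFinset, (-1) * (a - ζ) :=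
          Finset.prod_congr rfl fun ζ _ => by ring
        rw [h3, Finset.prod_mul_distrib, Finset.prod_const, hcard, hprodeval]
      have hm1 : ((-1 : K)) ^ N ≠ 0 := pow_ne_zero _ (by norm_num)
      have hlogm1 : Logp ((-1 : K) ^ N) = 0 := by
        rw [aux_log_pow Logp hhom _ (by norm_num), aux_log_neg_one Logp hhom, mul_zero]
      rw [h1, h2, hhom _ _ hm1 haN, hlogm1, zero_add]
      by_cases hgt : 1 < ‖a‖
      · have ha0 : a ≠ 0 := by
          intro h; rw [h, norm_zero] at hgt; linarith
        have hinvlt : ‖a⁻¹‖ < 1 := by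
          rw [norm_inv]
          exact inv_lt_one_of_one_lt₀ hgt
        have hne2 : 1 - (a⁻¹) ^ N ≠ 0 := by
          intro h
          have h4 : (a⁻¹) ^ N = 1 := (sub_eq_zero.mp h).symm
          have h5 : ‖a⁻¹‖ ^ N = 1 := by rw [← norm_pow, h4, norm_one]
          exact absurd h5 (pow_lt_one₀ (norm_nonneg _) hinvlt hN.ne').ne
        have hfac : a ^ N - 1 = a ^ N * (1 - (a⁻¹) ^ N) := by
          rw [mul_sub, mul_one, ← mul_pow, mul_inv_cancel₀ ha0, one_pow]
        rw [hfac, hhom _ _ (pow_ne_zero _ ha0) hne2, aux_log_pow Logp hhom _ ha0,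
          if_pos hgt, herrdef]
        simp only [if_pos hgt]
      · have hlt : ‖a‖ < 1 := lt_of_le_of_ne (not_lt.mp hgt) hna
        have hne2 : 1 - a ^ N ≠ 0 := by
          intro h
          have h4 : a ^ N = 1 := (sub_eq_zero.mp h).symm
          have h5 : ‖a‖ ^ N = 1 := by rw [← norm_pow, h4, norm_one]
          exact hpowne h5
        have hfac : a ^ N - 1 = (-1) * (1 - a ^ N) := by ring
        rw [hfac, hhom _ _ (by norm_num) hne2, aux_log_neg_one Logp hhom, zero_add,
          if_neg hgt, zero_add, herrdef]
        simp only [if_neg hgt]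
    have hsum1 : ∑ ζ ∈ (nthRoots N (1 : K)).toFinset, Logp (P.eval ζ)
        = N • Logp P.leadingCoeff
          + (R.map fun a => ∑ ζ ∈ (nthRoots N (1 : K)).toFinset, Logp (ζ - a)).sum := by
      rw [Finset.sum_congr rfl hstep1, Finset.sum_add_distrib, Finset.sum_const, hcard,
        aux_multiset_sum_swap]
    have hsum2 : (R.map fun a => ∑ ζ ∈ (nthRoots N (1 : K)).toFinset, Logp (ζ - a)).sum
        = (N : K) * ((R.filter fun α => 1 < ‖α‖).map Logp).sum + (R.map (err N)).sum := by
      rw [Multiset.map_congr rfl hinner, Multiset.sum_map_add]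
      congr 1
      rw [aux_multiset_sum_ite, ← Multiset.sum_map_mul_left]
    rw [hsum1, hsum2, nsmul_eq_mul, hLfin]
    field_simp
    ring
  -- limit of the error term
  have hcop : ∀ᶠ N in filt, N.Coprime p := by
    rw [hfilt]
    exact eventually_inf_principal.mpr (Eventually.of_forall fun _ h => h)
  have hpos : ∀ᶠ N in filt, 0 < N := by
    rw [hfilt]
    exact (eventually_gt_atTop 0).filter_mono inf_le_left
  have herr : Tendsto (fun N : ℕ => (N : K)⁻¹ * (R.map (err N)).sum) filt (nhds 0) := by
    have heq : ∀ N : ℕ, (N : K)⁻¹ * (R.map (err N)).sum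
        = (R.map fun a => (N : K)⁻¹ * err N a).sum := fun N =>
      (Multiset.sum_map_mul_left).symm
    refine Tendsto.congr (fun N => (heq N).symm) ?_
    refine aux_tendsto_multiset_sum R _ filt fun a ha => ?_
    set b := if 1 < ‖a‖ then a⁻¹ else a with hbdef
    have hb : ‖b‖ < 1 := by
      rw [hbdef]
      by_cases hgt : 1 < ‖a‖
      · rw [if_pos hgt, norm_inv]
        exact inv_lt_one_of_one_lt₀ hgt
      · rw [if_neg hgt]
        exact lt_of_le_of_ne (not_lt.mp hgt) (hroots a ha)
    refine squeeze_zero_norm' (a := fun N : ℕ => 2 * ‖b‖ ^ N) ?_ ?_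
    case refine_2 =>
      have h1 : Tendsto (fun N : ℕ => 2 * ‖b‖ ^ N) atTop (nhds (2 * 0)) :=
        (tendsto_pow_atTop_nhds_zero_of_lt_one (norm_nonneg b) hb).const_mul 2
      rw [mul_zero] at h1
      exact h1.mono_left inf_le_left
    case refine_1 =>
      have hsmall : ∀ᶠ N in filt, ‖b‖ ^ N ≤ 1 / 2 := by
        have h1 : Tendsto (fun N : ℕ => ‖b‖ ^ N) atTop (nhds 0) :=
          tendsto_pow_atTop_nhds_zero_of_lt_one (norm_nonneg b) hb
        have h2 : ∀ᶠ N in atTop, ‖b‖ ^ N ≤ 1 / 2 :=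
          h1.eventually_le_const (by norm_num)
        exact h2.filter_mono inf_le_left
      filter_upwards [hcop, hsmall] with N hc hs
      have h1 : ‖((N : ℕ) : K)⁻¹‖ = 1 := by
        rw [norm_inv, aux_norm_nat_coprime hprime hplt hc, inv_one]
      rw [norm_mul, h1, one_mul]
      have h2 : ‖(1 - b ^ N) - 1‖ ≤ 1 / 2 := by
        rw [sub_sub_cancel_left, norm_neg, norm_pow]
        exact hs
      have h3 := aux_log_bound hprime hp Logp hser (1 - b ^ N) h2
      have h4 : ‖(1 - b ^ N) - 1‖ = ‖b‖ ^ N := by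
        rw [sub_sub_cancel_left, norm_neg, norm_pow]
      rw [h4] at h3
      calc ‖err N a‖ = ‖Logp (1 - b ^ N)‖ := by rw [herrdef]
        _ ≤ 2 * ‖b‖ ^ N := h3
  have hfinal : Tendsto (fun N : ℕ => Lfin + (N : K)⁻¹ * (R.map (err N)).sum) filt
      (nhds (Lfin + 0)) := tendsto_const_nhds.add herr
  rw [add_zero] at hfinal
  exact hfinal.congr' (hpos.mono fun N hN => (hMain N hN).symm) |>.congr (fun _ => rfl)
end

section
/- The group of units of the Tate algebra ℚ_p⟨t_1^{±1},...,t_d^{±1}⟩ decomposes as a direct product p^ℤ × μ_{p−1} × t_1^ℤ ⋯ t_d^ℤ × (1 + p·ℤ_p⟨t_1^{±1},...,t_d^{±1}⟩): every unit f can be written uniquely as f = p^a ζ t^ν u with a ∈ ℤ, ζ a (p−1)-st root of unity, ν ∈ ℤ^d, and u a 1-unit. -/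
open Filter Topology in
private lemma norm_hasSum_le {p : ℕ} [Fact p.Prime] {ι : Type*} {h : ι → ℚ_[p]} {s : ℚ_[p]}
    {r : ℝ} (hr : 0 ≤ r) (hs : HasSum h s) (hb : ∀ i, ‖h i‖ ≤ r) : ‖s‖ ≤ r := by
  have ht : Tendsto (fun t : Finset ι => ‖∑ i ∈ t, h i‖) atTop (𝓝 ‖s‖) := hs.norm
  exact le_of_tendsto ht (Eventually.of_forall fun t =>
    IsUltrametricDist.norm_sum_le_of_forall_le_of_nonneg hr fun i _ => hb i)

private lemma norm_hasSum_eq {p : ℕ} [Fact p.Prime] {ι : Type*} [DecidableEq ι] {h : ι → ℚ_[p]}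
    {s : ℚ_[p]} {r : ℝ} (i₀ : ι) (hr : 0 ≤ r) (hs : HasSum h s)
    (hb : ∀ i, i ≠ i₀ → ‖h i‖ ≤ r) (hlt : r < ‖h i₀‖) : ‖s‖ = ‖h i₀‖ := by
  have h2 : HasSum (Function.update h i₀ 0) (s - h i₀) := by
    have := hs.update i₀ 0
    rwa [show (0 : ℚ_[p]) - h i₀ + s = s - h i₀ by ring] at this
  have h3 : ‖s - h i₀‖ ≤ r := by
    refine norm_hasSum_le hr h2 fun i => ?_
    rcases eq_or_ne i i₀ with rfl | hi
    · simpa using hr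
    · rw [Function.update_of_ne hi]; exact hb i hi
  have h4 : ‖s - h i₀‖ ≠ ‖h i₀‖ := ne_of_lt (lt_of_le_of_lt h3 hlt)
  have h5 : s = (s - h i₀) + h i₀ := by ring
  rw [h5, Padic.add_eq_max_of_ne h4, max_eq_right (le_of_lt (lt_of_le_of_lt h3 hlt))]

private lemma discrete_lt {p : ℕ} [hp : Fact p.Prime] {x y : ℚ_[p]} (hy : y ≠ 0)
    (h : ‖x‖ < ‖y‖) : ‖x‖ ≤ ‖y‖ * (p : ℝ)⁻¹ := by
  have hpne : (p : ℝ) ≠ 0 := Nat.cast_ne_zero.2 hp.1.pos.ne'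
  rw [Padic.norm_eq_zpow_neg_valuation hy] at h ⊢
  have := (Padic.norm_lt_pow_iff_norm_le_pow_sub_one x _).1 h
  rwa [zpow_sub_one₀ hpne] at this
  
private lemma rigid {p : ℕ} [hp : Fact p.Prime] {η : ℚ_[p]} (h1 : η ^ (p - 1) = 1)
    (h2 : ‖η - 1‖ ≤ (p : ℝ)⁻¹) : η = 1 := by
  have hp2 : 2 ≤ p := hp.1.two_le
  have hpne : p - 1 ≠ 0 := by omega
  have hp1R : 1 < (p : ℝ) := by exact_mod_cast hp.1.one_lt
  have hinv : (p : ℝ)⁻¹ < 1 := inv_lt_one_of_one_lt₀ hp1R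
  have hnη : ‖η‖ = 1 := by
    have h3 : ‖η‖ ^ (p - 1) = 1 := by rw [← norm_pow, h1, norm_one]
    rcases lt_trichotomy ‖η‖ 1 with h | h | h
    · exact absurd h3 (ne_of_lt (pow_lt_one₀ (norm_nonneg _) h hpne))
    · exact h
    · exact absurd h3.symm (ne_of_lt (one_lt_pow₀ h hpne))
  have hpow : ∀ i : ℕ, ‖η ^ i - 1‖ ≤ ‖η - 1‖ := by
    intro i
    have := geom_sum_mul η i
    rw [← this, norm_mul]
    have hsum : ‖∑ j ∈ Finset.range i, η ^ j‖ ≤ 1 :=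
      IsUltrametricDist.norm_sum_le_of_forall_le_of_nonneg zero_le_one
        fun j _ => by rw [norm_pow, hnη, one_pow]
    calc ‖∑ j ∈ Finset.range i, η ^ j‖ * ‖η - 1‖ ≤ 1 * ‖η - 1‖ := by
          exact mul_le_mul_of_nonneg_right hsum (norm_nonneg _)
      _ = ‖η - 1‖ := one_mul _
  set S := ∑ i ∈ Finset.range p, η ^ i with hS
  have hSval : ‖S‖ ≤ (p : ℝ)⁻¹ := by
    have hsplit : S = (∑ i ∈ Finset.range p, (η ^ i - 1)) + (p : ℚ_[p]) := by
      rw [Finset.sum_sub_distrib, Finset.sum_const, Finset.card_range]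
      push_cast; ring
    rw [hsplit]
    refine le_trans (Padic.nonarchimedean _ _) (max_le ?_ ?_)
    · exact IsUltrametricDist.norm_sum_le_of_forall_le_of_nonneg
        (by positivity) fun i _ => le_trans (hpow i) h2
    · exact le_of_eq Padic.norm_p
  have hηp : η ^ p = η := by
    have hps : η ^ p = η ^ (p - 1) * η := by rw [← pow_succ]; congr 1; omega
    rw [hps, h1, one_mul]
  have hgeom : S * (η - 1) = η - 1 := by
    have hg := geom_sum_mul η p
    rw [← hS, hηp] at hg
    exact hg
  have : (S - 1) * (η - 1) = 0 := by rw [sub_mul, hgeom, one_mul, sub_self]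
  rcases mul_eq_zero.1 this with h | h
  · exfalso
    have hS1 : S = 1 := sub_eq_zero.1 h
    rw [hS1, norm_one] at hSval
    linarith
  · exact sub_eq_zero.1 h

private lemma teich {p : ℕ} [hp : Fact p.Prime] {w : ℚ_[p]} (hw : ‖w‖ = 1) :
    ∃ ζ : ℚ_[p], ζ ^ (p - 1) = 1 ∧ ‖w - ζ‖ ≤ (p : ℝ)⁻¹ := by
  have hp2 : 2 ≤ p := hp.1.two_le
  have hp1R : 1 < (p : ℝ) := by exact_mod_cast hp.1.one_lt
  set W : ℤ_[p] := ⟨w, le_of_eq hw⟩ with hWdef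
  have hWnorm : ‖W‖ = 1 := by rw [PadicInt.norm_def]; exact hw
  set F : Polynomial ℤ_[p] := Polynomial.X ^ (p - 1) - 1 with hF
  have hFeval : ∀ z : ℤ_[p], F.eval z = z ^ (p - 1) - 1 := by intro z; simp [hF]
  -- norm of F.eval W is small
  have hW0 : PadicInt.toZMod W ≠ 0 := by
    intro h0
    have : W ∈ RingHom.ker (PadicInt.toZMod (p := p)) := h0
    rw [PadicInt.ker_toZMod, IsLocalRing.mem_maximalIdeal, PadicInt.mem_nonunits] at this
    rw [hWnorm] at this; exact lt_irrefl 1 this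
  have hfermat : (PadicInt.toZMod W) ^ (p - 1) = 1 := ZMod.pow_card_sub_one_eq_one hW0
  have hFW : ‖F.eval W‖ ≤ (p : ℝ)⁻¹ := by
    rw [hFeval]
    have hmem : W ^ (p - 1) - 1 ∈ RingHom.ker (PadicInt.toZMod (p := p)) := by
      rw [RingHom.mem_ker, map_sub, map_pow, map_one, hfermat, sub_self]
    rw [PadicInt.ker_toZMod, PadicInt.maximalIdeal_eq_span_p] at hmem
    have := (PadicInt.norm_le_pow_iff_mem_span_pow (W ^ (p - 1) - 1) 1).2 (by rwa [pow_one])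
    simpa using this
  have hderiv : Polynomial.derivative F = Polynomial.C ((p - 1 : ℕ) : ℤ_[p]) *
      Polynomial.X ^ (p - 1 - 1) := by
    rw [hF, Polynomial.derivative_sub, Polynomial.derivative_one, Polynomial.derivative_X_pow,
      sub_zero]
  have hnormcast : ‖((p - 1 : ℕ) : ℤ_[p])‖ = 1 := by
    refine le_antisymm (PadicInt.norm_le_one _) ?_
    by_contra hlt
    push_neg at hlt
    have : ((p - 1 : ℕ) : ℤ_[p]) = (((p : ℤ) - 1 : ℤ) : ℤ_[p]) := by
      push_cast [Nat.cast_sub hp.1.one_le]; ring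
    rw [this, PadicInt.norm_int_lt_one_iff_dvd] at hlt
    have := Int.le_of_dvd (by omega) hlt
    omega
  have hF'W : ‖(Polynomial.derivative F).eval W‖ = 1 := by
    rw [hderiv]
    simp only [Polynomial.eval_mul, Polynomial.eval_C, Polynomial.eval_pow, Polynomial.eval_X]
    rw [norm_mul, norm_pow, hnormcast, hWnorm, one_pow, one_mul]
  have hhensel : ‖F.eval W‖ < ‖(Polynomial.derivative F).eval W‖ ^ 2 := by
    rw [hF'W, one_pow]
    exact lt_of_le_of_lt hFW (inv_lt_one_of_one_lt₀ hp1R)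
  obtain ⟨z, hz, hdist, -, -⟩ := hensels_lemma hhensel
  simp only [Polynomial.coe_aeval_eq_eval] at hz hdist
  refine ⟨(z : ℚ_[p]), ?_, ?_⟩
  · have : z ^ (p - 1) = 1 := by
      have := hFeval z; rw [hz] at this; exact (sub_eq_zero.1 this.symm)
    calc ((z : ℚ_[p])) ^ (p - 1) = ((z ^ (p - 1) : ℤ_[p]) : ℚ_[p]) := by push_cast; ring
      _ = 1 := by rw [this]; push_cast; ring
  · have h1 : ‖z - W‖ < 1 := by rw [hF'W] at hdist; exact hdist
    have h2 : ‖z - W‖ ≤ (p : ℝ) ^ ((0 : ℤ) - 1) := by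
      rw [← PadicInt.norm_lt_pow_iff_norm_le_pow_sub_one]
      simpa using h1
    have hcoe : ((W : ℚ_[p])) = w := rfl
    have h3 : ‖w - (z : ℚ_[p])‖ = ‖z - W‖ := by
      rw [PadicInt.norm_def, PadicInt.coe_sub, hcoe, norm_sub_rev]
    rw [h3]
    simpa using h2

private lemma norm_one_of_pow_eq_one {p : ℕ} [hp : Fact p.Prime] {ζ : ℚ_[p]}
    (h : ζ ^ (p - 1) = 1) : ‖ζ‖ = 1 := by
  have hpne : p - 1 ≠ 0 := by have := hp.1.two_le; omega
  have h3 : ‖ζ‖ ^ (p - 1) = 1 := by rw [← norm_pow, h, norm_one]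
  rcases lt_trichotomy ‖ζ‖ 1 with h' | h' | h'
  · exact absurd h3 (ne_of_lt (pow_lt_one₀ (norm_nonneg _) h' hpne))
  · exact h'
  · exact absurd h3.symm (ne_of_lt (one_lt_pow₀ h' hpne))

private lemma ne_zero_of_pow_eq_one {p : ℕ} [hp : Fact p.Prime] {ζ : ℚ_[p]}
    (h : ζ ^ (p - 1) = 1) : ζ ≠ 0 := by
  intro h0
  rw [h0, zero_pow (by have := hp.1.two_le; omega)] at h
  exact zero_ne_one h

private lemma norm_eq_one_of_near {p : ℕ} [hp : Fact p.Prime] {x : ℚ_[p]}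
    (h : ‖x - 1‖ ≤ (p : ℝ)⁻¹) : ‖x‖ = 1 := by
  have hp1R : 1 < (p : ℝ) := by exact_mod_cast hp.1.one_lt
  have hlt : ‖x - 1‖ < 1 := lt_of_le_of_lt h (inv_lt_one_of_one_lt₀ hp1R)
  have hne : ‖x - 1‖ ≠ ‖(1 : ℚ_[p])‖ := by rw [norm_one]; exact ne_of_lt hlt
  have : x = (x - 1) + 1 := by ring
  rw [this, Padic.add_eq_max_of_ne hne, norm_one, max_eq_right hlt.le]

private lemma decomp_unique {p : ℕ} [hp : Fact p.Prime] {d : ℕ} (f : (Fin d → ℤ) → ℚ_[p])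
    (a a' : ℤ) (ζ ζ' : ℚ_[p]) (ν₀ ν₀' : Fin d → ℤ) (u u' : (Fin d → ℤ) → ℚ_[p])
    (hζ : ζ ^ (p - 1) = 1)
    (hu : ∀ μ, ‖u μ - (if μ = 0 then 1 else 0)‖ ≤ (p : ℝ)⁻¹)
    (hfu : ∀ μ, f μ = (p : ℚ_[p]) ^ a * ζ * u (μ - ν₀))
    (hζ' : ζ' ^ (p - 1) = 1)
    (hu' : ∀ μ, ‖u' μ - (if μ = 0 then 1 else 0)‖ ≤ (p : ℝ)⁻¹)
    (hfu' : ∀ μ, f μ = (p : ℚ_[p]) ^ a' * ζ' * u' (μ - ν₀')) :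
    a = a' ∧ ζ = ζ' ∧ ν₀ = ν₀' ∧ u = u' := by
  have hp1R : 1 < (p : ℝ) := by exact_mod_cast hp.1.one_lt
  have hpinv1 : (p : ℝ)⁻¹ < 1 := inv_lt_one_of_one_lt₀ hp1R
  have hpQ : (p : ℚ_[p]) ≠ 0 := Nat.cast_ne_zero.2 hp.1.ne_zero
  -- basic consequences of a decomposition
  have basic : ∀ (b : ℤ) (ξ : ℚ_[p]) (ν₁ : Fin d → ℤ) (v : (Fin d → ℤ) → ℚ_[p]),
      ξ ^ (p - 1) = 1 → (∀ μ, ‖v μ - (if μ = 0 then 1 else 0)‖ ≤ (p : ℝ)⁻¹) →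
      (∀ μ, f μ = (p : ℚ_[p]) ^ b * ξ * v (μ - ν₁)) →
      ‖f ν₁‖ = (p : ℝ) ^ (-b) ∧ ∀ μ, μ ≠ ν₁ → ‖f μ‖ ≤ (p : ℝ) ^ (-b) * (p : ℝ)⁻¹ := by
    intro b ξ ν₁ v hξ hv hfv
    have hξn : ‖ξ‖ = 1 := norm_one_of_pow_eq_one hξ
    have hv0 : ‖v 0‖ = 1 := by
      have := hv 0
      rw [if_pos rfl] at this
      exact norm_eq_one_of_near this
    constructor
    · have := hfv ν₁
      rw [sub_self] at this
      rw [this, norm_mul, norm_mul, Padic.norm_p_zpow, hξn, hv0, mul_one, mul_one]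
    · intro μ hμ
      have hμ0 : μ - ν₁ ≠ 0 := sub_ne_zero.2 hμ
      have hvb : ‖v (μ - ν₁)‖ ≤ (p : ℝ)⁻¹ := by
        have := hv (μ - ν₁)
        rwa [if_neg hμ0, sub_zero] at this
      have := hfv μ
      rw [this, norm_mul, norm_mul, Padic.norm_p_zpow, hξn, mul_one]
      exact mul_le_mul_of_nonneg_left hvb (by positivity)
  obtain ⟨hn1, hs1⟩ := basic a ζ ν₀ u hζ hu hfu
  obtain ⟨hn2, hs2⟩ := basic a' ζ' ν₀' u' hζ' hu' hfu'
  have hζ0 : ζ ≠ 0 := ne_zero_of_pow_eq_one hζ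
  have hζ'0 : ζ' ≠ 0 := ne_zero_of_pow_eq_one hζ'
  -- ν₀ = ν₀'
  have hν : ν₀ = ν₀' := by
    by_contra hne
    have h1 : ‖f ν₀‖ ≤ (p : ℝ) ^ (-a') * (p : ℝ)⁻¹ := hs2 ν₀ hne
    have h2 : ‖f ν₀'‖ ≤ (p : ℝ) ^ (-a) * (p : ℝ)⁻¹ := hs1 ν₀' (Ne.symm hne)
    rw [hn1] at h1; rw [hn2] at h2
    have hx : (0:ℝ) < (p : ℝ) ^ (-a) := by positivity
    have hy : (0:ℝ) < (p : ℝ) ^ (-a') := by positivity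
    have hi : (0:ℝ) < (p : ℝ)⁻¹ := by positivity
    nlinarith
  subst hν
  -- a = a'
  have ha : a = a' := by
    have : (p : ℝ) ^ (-a) = (p : ℝ) ^ (-a') := by rw [← hn1, ← hn2]
    have := (zpow_right_strictMono₀ hp1R).injective this
    omega
  subst ha
  -- pointwise comparison
  have hcomp : ∀ ν, ζ * u ν = ζ' * u' ν := by
    intro ν
    have h1 := hfu (ν + ν₀)
    have h2 := hfu' (ν + ν₀)
    rw [add_sub_cancel_right] at h1 h2
    have := h1.symm.trans h2
    rw [mul_assoc, mul_assoc] at this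
    exact mul_left_cancel₀ (zpow_ne_zero a hpQ : (p:ℚ_[p]) ^ a ≠ 0) this
  -- ζ = ζ'
  have hu'0 : ‖u' 0‖ = 1 := by
    have := hu' 0; rw [if_pos rfl] at this; exact norm_eq_one_of_near this
  have hu'00 : u' 0 ≠ 0 := by intro h0; rw [h0, norm_zero] at hu'0; norm_num at hu'0
  have hdiff : ‖u 0 - u' 0‖ ≤ (p : ℝ)⁻¹ := by
    have e : u 0 - u' 0 = (u 0 - 1) - (u' 0 - 1) := by ring
    rw [e, sub_eq_add_neg]
    refine le_trans (Padic.nonarchimedean _ _) (max_le ?_ ?_)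
    · have := hu 0; rwa [if_pos rfl] at this
    · rw [norm_neg]; have := hu' 0; rwa [if_pos rfl] at this
  have hζζ' : ζ = ζ' := by
    have hval := hcomp 0
    have hkey : (ζ' - ζ) * u' 0 = ζ * (u 0 - u' 0) := by
      rw [sub_mul, mul_sub, ← hval]
    have hnorm : ‖ζ' - ζ‖ = ‖u 0 - u' 0‖ := by
      have := congrArg (fun x => ‖x‖) hkey
      simp only [norm_mul] at this
      rw [hu'0, mul_one, norm_one_of_pow_eq_one hζ, one_mul] at this
      exact this
    set η := ζ⁻¹ * ζ' with hη
    have hηpow : η ^ (p - 1) = 1 := by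
      rw [hη, mul_pow, inv_pow, hζ, hζ', inv_one, one_mul]
    have hηnear : ‖η - 1‖ ≤ (p : ℝ)⁻¹ := by
      have e : η - 1 = ζ⁻¹ * (ζ' - ζ) := by
        rw [hη, mul_sub, inv_mul_cancel₀ hζ0]
      rw [e, norm_mul, norm_inv, norm_one_of_pow_eq_one hζ, inv_one, one_mul, hnorm]
      exact hdiff
    have h1 := rigid hηpow hηnear
    rw [hη] at h1
    exact (inv_mul_eq_one₀ hζ0).1 h1
  subst hζζ'
  refine ⟨rfl, rfl, rfl, funext fun ν => ?_⟩
  exact mul_left_cancel₀ hζ0 (hcomp ν)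


/-- The unit group of the Tate algebra `ℚ_p⟨t_1^{±1},…,t_d^{±1}⟩`
(series `Σ_{ν ∈ ℤ^d} x_ν t^ν` with coefficients tending to `0`, with convolution
product) decomposes as the direct product
`p^ℤ × μ_{p−1} × t_1^ℤ⋯t_d^ℤ × (1 + p·ℤ_p⟨t^{±1}⟩)`: every unit `f` can be written
**uniquely** as `f = p^a · ζ · t^{ν₀} · u` with `a ∈ ℤ`, `ζ^{p-1} = 1`, `ν₀ ∈ ℤ^d` and
`u` a `1`-unit (coefficientwise: `f(μ) = p^a · ζ · u(μ − ν₀)` for all `μ`, where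
`‖u(μ) − δ_{0}(μ)‖ ≤ p⁻¹`). -/
theorem stmt12 (p : ℕ) [Fact p.Prime] (d : ℕ)
    (f : (Fin d → ℤ) → ℚ_[p]) (hf : ∀ ε > (0:ℝ), {ν | ε ≤ ‖f ν‖}.Finite)
    (hunit : ∃ g : (Fin d → ℤ) → ℚ_[p], (∀ ε > (0:ℝ), {ν | ε ≤ ‖g ν‖}.Finite) ∧
      ∀ μ, HasSum (fun ν => f ν * g (μ - ν)) (if μ = 0 then 1 else 0)) :
    ∃! q : ℤ × ℚ_[p] × (Fin d → ℤ) × ((Fin d → ℤ) → ℚ_[p]),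
      q.2.1 ^ (p - 1) = 1 ∧
      (∀ ε > (0:ℝ), {ν | ε ≤ ‖q.2.2.2 ν‖}.Finite) ∧
      (∀ μ, ‖q.2.2.2 μ - (if μ = 0 then 1 else 0)‖ ≤ (p : ℝ)⁻¹) ∧
      (∀ μ, f μ = (p : ℚ_[p]) ^ q.1 * q.2.1 * q.2.2.2 (μ - q.2.2.1)) := by
  classical
  obtain ⟨g, hgfin, hmul⟩ := hunit
  haveI iwf : WellFoundedLT (Fin d) := inferInstance
  haveI iLex : IsOrderedCancelAddMonoid (Lex (Fin d → ℤ)) := inferInstance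
  have hp : Fact p.Prime := inferInstance
  have hp1R : 1 < (p : ℝ) := by exact_mod_cast hp.1.one_lt
  have hppos : (0 : ℝ) < p := lt_trans one_pos hp1R
  have hpinv1 : (p : ℝ)⁻¹ < 1 := inv_lt_one_of_one_lt₀ hp1R
  have hpinv0 : (0 : ℝ) < (p : ℝ)⁻¹ := by positivity
  have hpQ : (p : ℚ_[p]) ≠ 0 := Nat.cast_ne_zero.2 hp.1.ne_zero
  -- f and g have nonzero coefficients
  have hfne : ∃ ν, f ν ≠ 0 := by
    by_contra h; push_neg at h
    have h0 := hmul 0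
    simp only [h, zero_mul] at h0
    have := h0.unique hasSum_zero
    norm_num at this
  have hgne : ∃ ν, g ν ≠ 0 := by
    by_contra h; push_neg at h
    have h0 := hmul 0
    simp only [h, mul_zero] at h0
    have := h0.unique hasSum_zero
    norm_num at this
  -- attained maxima
  have hmaxex : ∀ (F : (Fin d → ℤ) → ℚ_[p]), (∀ ε > (0:ℝ), {ν | ε ≤ ‖F ν‖}.Finite) →
      (∃ ν, F ν ≠ 0) → ∃ ν₁, F ν₁ ≠ 0 ∧ ∀ ν, ‖F ν‖ ≤ ‖F ν₁‖ := by
    rintro F hFfin ⟨ν₂, hν₂⟩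
    have hpos : 0 < ‖F ν₂‖ := norm_pos_iff.2 hν₂
    set s := (hFfin ‖F ν₂‖ hpos).toFinset with hs
    have hν₂s : ν₂ ∈ s := by
      rw [hs, Set.Finite.mem_toFinset]
      simp only [Set.mem_setOf_eq]
      exact le_rfl
    obtain ⟨ν₁, hν₁s, hmax⟩ := s.exists_max_image (fun ν => ‖F ν‖) ⟨ν₂, hν₂s⟩
    refine ⟨ν₁, ?_, ?_⟩
    · exact norm_pos_iff.1 (lt_of_lt_of_le hpos (hmax ν₂ hν₂s))
    · intro ν
      by_cases hν : ν ∈ s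
      · exact hmax ν hν
      · rw [hs, Set.Finite.mem_toFinset] at hν
        exact le_trans (le_of_lt (not_le.1 hν)) (hmax ν₂ hν₂s)
  obtain ⟨νf, hνf0, hνfmax⟩ := hmaxex f hf hfne
  obtain ⟨νg, hνg0, hνgmax⟩ := hmaxex g hgfin hgne
  set M := ‖f νf‖ with hMdef
  set N := ‖g νg‖ with hNdef
  have hM0 : 0 < M := norm_pos_iff.2 hνf0
  have hN0 : 0 < N := norm_pos_iff.2 hνg0
  set A := (hf M hM0).toFinset with hAdef
  set B := (hgfin N hN0).toFinset with hBdef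
  have hAmem : ∀ ν, ν ∈ A ↔ M ≤ ‖f ν‖ := fun ν => by
    rw [hAdef, Set.Finite.mem_toFinset]; exact Iff.rfl
  have hBmem : ∀ ν, ν ∈ B ↔ N ≤ ‖g ν‖ := fun ν => by
    rw [hBdef, Set.Finite.mem_toFinset]; exact Iff.rfl
  have hAnorm : ∀ ν ∈ A, ‖f ν‖ = M := fun ν hν => le_antisymm (hνfmax ν) ((hAmem ν).1 hν)
  have hBnorm : ∀ ν ∈ B, ‖g ν‖ = N := fun ν hν => le_antisymm (hνgmax ν) ((hBmem ν).1 hν)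
  have hAne : A.Nonempty := ⟨νf, (hAmem νf).2 (le_refl M)⟩
  have hBne : B.Nonempty := ⟨νg, (hBmem νg).2 (le_refl N)⟩
  -- the key dominance claim
  have key : ∀ α β, α ∈ A → β ∈ B → (∀ ν ∈ A, ν ≠ α → (α + β - ν) ∉ B) → α + β = 0 := by
    intro α β hαA hβB hdom
    have hfα : ‖f α‖ = M := hAnorm α hαA
    have hgβ : ‖g β‖ = N := hBnorm β hβB
    have hterm : ∀ ν, ν ≠ α → ‖f ν * g (α + β - ν)‖ ≤ M * N * (p : ℝ)⁻¹ := by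
      intro ν hν
      rw [norm_mul]
      by_cases hνA : ν ∈ A
      · have h2 : (α + β - ν) ∉ B := hdom ν hνA hν
        have h3 : ‖g (α + β - ν)‖ < N := not_le.1 (fun hc => h2 ((hBmem _).2 hc))
        have h4 : ‖g (α + β - ν)‖ ≤ N * (p : ℝ)⁻¹ := discrete_lt hνg0 h3
        calc ‖f ν‖ * ‖g (α + β - ν)‖ ≤ M * (N * (p : ℝ)⁻¹) :=
              mul_le_mul (hνfmax ν) h4 (norm_nonneg _) (le_of_lt hM0)
          _ = M * N * (p : ℝ)⁻¹ := by ring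
      · have h3 : ‖f ν‖ < M := not_le.1 (fun hc => hνA ((hAmem ν).2 hc))
        have h4 : ‖f ν‖ ≤ M * (p : ℝ)⁻¹ := discrete_lt hνf0 h3
        calc ‖f ν‖ * ‖g (α + β - ν)‖ ≤ (M * (p : ℝ)⁻¹) * N :=
              mul_le_mul h4 (hνgmax _) (norm_nonneg _) (by positivity)
          _ = M * N * (p : ℝ)⁻¹ := by ring
    have hMN : ‖f α * g (α + β - α)‖ = M * N := by
      rw [add_sub_cancel_left, norm_mul, hfα, hgβ]
    have hlt : M * N * (p : ℝ)⁻¹ < ‖f α * g (α + β - α)‖ := by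
      rw [hMN]
      nlinarith [mul_pos hM0 hN0]
    have hnorm := norm_hasSum_eq α (by positivity) (hmul (α + β)) hterm hlt
    rw [hMN] at hnorm
    by_contra h0
    rw [if_neg h0, norm_zero] at hnorm
    nlinarith [mul_pos hM0 hN0]
  -- lexicographic extrema
  obtain ⟨α, hαA, hαmax⟩ := A.exists_max_image toLex hAne
  obtain ⟨α', hα'A, hα'min⟩ := A.exists_min_image toLex hAne
  obtain ⟨β, hβB, hβmax⟩ := B.exists_max_image toLex hBne
  obtain ⟨β', hβ'B, hβ'min⟩ := B.exists_min_image toLex hBne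
  have hsum1 : α + β = 0 := by
    refine key α β hαA hβB ?_
    intro ν hνA hν hmem
    have h1 : toLex ν < toLex α :=
      lt_of_le_of_ne (hαmax ν hνA) (fun h => hν (toLex.injective h))
    have h2 : toLex (α + β - ν) ≤ toLex β := hβmax _ hmem
    have he : toLex (α + β - ν) = toLex α + toLex β - toLex ν := rfl
    rw [he] at h2
    have h3 : toLex α + toLex β - toLex α < toLex α + toLex β - toLex ν :=
      sub_lt_sub_left h1 _
    rw [add_sub_cancel_left] at h3
    exact absurd h2 (not_le.2 h3)
  have hsum2 : α' + β' = 0 := by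
    refine key α' β' hα'A hβ'B ?_
    intro ν hνA hν hmem
    have h1 : toLex α' < toLex ν :=
      lt_of_le_of_ne (hα'min ν hνA) (fun h => hν (toLex.injective h.symm))
    have h2 : toLex β' ≤ toLex (α' + β' - ν) := hβ'min _ hmem
    have he : toLex (α' + β' - ν) = toLex α' + toLex β' - toLex ν := rfl
    rw [he] at h2
    have h3 : toLex α' + toLex β' - toLex ν < toLex α' + toLex β' - toLex α' :=
      sub_lt_sub_left h1 _
    rw [add_sub_cancel_left] at h3
    exact absurd h2 (not_le.2 h3)
  -- uniqueness of the maximizer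
  have hαα' : toLex α = toLex α' := by
    have e1 : toLex α + toLex β = 0 := congrArg toLex hsum1
    have e2 : toLex α' + toLex β' = 0 := congrArg toLex hsum2
    have f1 : toLex α = -toLex β := eq_neg_of_add_eq_zero_left e1
    have f2 : toLex α' = -toLex β' := eq_neg_of_add_eq_zero_left e2
    have hββ' : toLex β' ≤ toLex β := hβmax β' hβ'B
    have : toLex α ≤ toLex α' := by rw [f1, f2]; exact neg_le_neg hββ'
    exact le_antisymm this (hαmax α' hα'A)
  have hAuniq : ∀ ν ∈ A, ν = α := by
    intro ν hν
    have h1 : toLex ν ≤ toLex α := hαmax ν hν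
    have h2 : toLex α ≤ toLex ν := hαα' ▸ hα'min ν hν
    exact toLex.injective (le_antisymm h1 h2)
  have hfα : ‖f α‖ = M := hAnorm α hαA
  have hfα0 : f α ≠ 0 := by
    intro h0; rw [h0, norm_zero] at hfα; exact absurd hfα.symm (ne_of_gt hM0)
  have hsmall : ∀ ν, ν ≠ α → ‖f ν‖ < M := by
    intro ν hν
    refine not_le.1 (fun hc => hν (hAuniq ν ((hAmem ν).2 hc)))
  -- construct the decomposition
  set a := (f α).valuation with hadef
  have hMa : M = (p : ℝ) ^ (-a) := by rw [← hfα]; exact Padic.norm_eq_zpow_neg_valuation hfα0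
  set w : ℚ_[p] := f α * (p : ℚ_[p]) ^ (-a) with hwdef
  have hwnorm : ‖w‖ = 1 := by
    rw [hwdef, norm_mul, Padic.norm_p_zpow, neg_neg, hfα, hMa,
      ← zpow_add₀ (ne_of_gt hppos), neg_add_cancel, zpow_zero]
  obtain ⟨ζ, hζpow, hζdist⟩ := teich hwnorm
  have hζ0 : ζ ≠ 0 := ne_zero_of_pow_eq_one hζpow
  have hζnorm : ‖ζ‖ = 1 := norm_one_of_pow_eq_one hζpow
  set u : (Fin d → ℤ) → ℚ_[p] := fun ν => (p : ℚ_[p]) ^ (-a) * ζ⁻¹ * f (ν + α) with hudef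
  have hnormu : ∀ ν, ‖u ν‖ = M⁻¹ * ‖f (ν + α)‖ := by
    intro ν
    rw [hudef]
    simp only []
    rw [norm_mul, norm_mul, Padic.norm_p_zpow, neg_neg, norm_inv, hζnorm, inv_one, mul_one,
      hMa, ← zpow_neg, neg_neg]
  -- the four conditions
  have cond1 : ζ ^ (p - 1) = 1 := hζpow
  have cond2 : ∀ ε > (0:ℝ), {ν | ε ≤ ‖u ν‖}.Finite := by
    intro ε hε
    have hset : {ν | ε ≤ ‖u ν‖} = (fun ν => ν + α) ⁻¹' {μ | M * ε ≤ ‖f μ‖} := by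
      ext ν
      simp only [Set.mem_setOf_eq, Set.mem_preimage, hnormu ν]
      exact le_inv_mul_iff₀ hM0
    rw [hset]
    exact (hf (M * ε) (by positivity)).preimage ((add_left_injective α).injOn)
  have cond3 : ∀ μ, ‖u μ - (if μ = 0 then 1 else 0)‖ ≤ (p : ℝ)⁻¹ := by
    intro μ
    by_cases hμ : μ = 0
    · subst hμ
      rw [if_pos rfl]
      have e : u 0 - 1 = ζ⁻¹ * (w - ζ) := by
        show (p : ℚ_[p]) ^ (-a) * ζ⁻¹ * f (0 + α) - 1 = ζ⁻¹ * (f α * (p : ℚ_[p]) ^ (-a) - ζ)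
        rw [zero_add, mul_sub, inv_mul_cancel₀ hζ0]; ring
      rw [e, norm_mul, norm_inv, hζnorm, inv_one, one_mul]
      exact hζdist
    · rw [if_neg hμ, sub_zero, hnormu μ]
      have hne : μ + α ≠ α := by
        intro h; exact hμ (add_eq_right.1 h)
      have h1 : ‖f (μ + α)‖ < ‖f α‖ := by rw [hfα]; exact hsmall _ hne
      have h2 : ‖f (μ + α)‖ ≤ M * (p : ℝ)⁻¹ := by
        have := discrete_lt hfα0 h1
        rwa [hfα] at this
      calc M⁻¹ * ‖f (μ + α)‖ ≤ M⁻¹ * (M * (p : ℝ)⁻¹) :=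
            mul_le_mul_of_nonneg_left h2 (by positivity)
        _ = (p : ℝ)⁻¹ := by field_simp
  have cond4 : ∀ μ, f μ = (p : ℚ_[p]) ^ a * ζ * u (μ - α) := by
    intro μ
    show f μ = (p : ℚ_[p]) ^ a * ζ * ((p : ℚ_[p]) ^ (-a) * ζ⁻¹ * f (μ - α + α))
    rw [sub_add_cancel]
    have h1 : (p : ℚ_[p]) ^ a * (p : ℚ_[p]) ^ (-a) = 1 := by
      rw [← zpow_add₀ hpQ, add_neg_cancel, zpow_zero]
    have h2 : ζ * ζ⁻¹ = 1 := mul_inv_cancel₀ hζ0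
    rw [show (p : ℚ_[p]) ^ a * ζ * ((p : ℚ_[p]) ^ (-a) * ζ⁻¹ * f μ)
        = ((p : ℚ_[p]) ^ a * (p : ℚ_[p]) ^ (-a)) * ((ζ * ζ⁻¹) * f μ) by ring, h1, h2,
      one_mul, one_mul]
  refine ⟨(a, ζ, α, u), ⟨cond1, cond2, cond3, cond4⟩, ?_⟩
  rintro ⟨a', ζ', ν₀', u'⟩ ⟨hc1, hc2, hc3, hc4⟩
  obtain ⟨ha, hζ, hν₀, hu⟩ := decomp_unique f a' a ζ' ζ ν₀' α u' u hc1 hc3 hc4 cond1 cond3 cond4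
  simp only [Prod.mk.injEq]
  exact ⟨ha, hζ, hν₀, hu⟩
end

section
/- Let A be a p-adic Banach algebra over ℤ_p with p = 2, and let φ : 1 + 2A → ℚ_2 be a map satisfying: φ is a group homomorphism on 1 + 4A, φ(u^n) = nφ(u) whenever powers of a single element are taken, and φ(aua^{-1}) = φ(u) for all units a and u ∈ 1 + 2A. Then φ is a group homomorphism on 1 + 2A. -/
/-!
Squares of elements of `1 + 2A` lie in `1 + 4A`, so `(1 + 2A)/(1 + 4A)` has exponent two and is
abelian: commutators of `1 + 2A` lie in `1 + 4A`. Squaring `x * y` with `x ∈ 1 + 4A` and using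
conjugation invariance shows `φ(x * y) = φ x + φ y` already when only `x ∈ 1 + 4A`, which makes `φ`
vanish on commutators. Finally `(u * v)² = u² * (⁅u⁻¹, v⁆ * v²)` with `u²`, `⁅u⁻¹, v⁆ ∈ 1 + 4A`
gives `2 φ(u * v) = 2 φ u + 2 φ v`, and one divides by two.
-/

section Group

open scoped commutatorElement

variable {G M : Type*} [Group G] [AddCommGroup M] {K : Subgroup G} [K.Normal] {φ : G → M}

theorem Subgroup.commutatorElement_mem_of_forall_sq_mem (hsqK : ∀ g, g ^ 2 ∈ K) (g h : G) :
    ⁅g, h⁆ ∈ K := by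
  have hconj : h⁻¹ * g⁻¹ ^ 2 * h⁻¹⁻¹ ∈ K := Subgroup.Normal.conj_mem ‹_› _ (hsqK g⁻¹) h⁻¹
  have key : ⁅g, h⁆ = (g * h) ^ 2 * (h⁻¹ * g⁻¹ ^ 2 * h⁻¹⁻¹) * h⁻¹ ^ 2 := by
    rw [commutatorElement_def, sq, sq, sq]; group
  rw [key]
  exact K.mul_mem (K.mul_mem (hsqK _) hconj) (hsqK _)

variable [IsAddTorsionFree M]

theorem map_mul_of_left_mem (hsqK : ∀ g, g ^ 2 ∈ K)
    (hK : ∀ x ∈ K, ∀ y ∈ K, φ (x * y) = φ x + φ y) (hsq : ∀ g, φ (g ^ 2) = 2 • φ g)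
    (hconj : ∀ g h, φ (g * h * g⁻¹) = φ h) {x : G} (hx : x ∈ K) (y : G) :
    φ (x * y) = φ x + φ y := by
  have hyx : y * x * y⁻¹ ∈ K := Subgroup.Normal.conj_mem ‹_› x hx y
  have key : (x * y) ^ 2 = x * (y * x * y⁻¹) * y ^ 2 := by simp [sq, mul_assoc]
  refine IsAddTorsionFree.nsmul_right_injective two_ne_zero ?_
  calc 2 • φ (x * y) = φ (x * (y * x * y⁻¹)) + φ (y ^ 2) := by
        rw [← hsq, key, hK _ (K.mul_mem hx hyx) _ (hsqK y)]
    _ = 2 • (φ x + φ y) := by rw [hK _ hx _ hyx, hconj, hsq]; abel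

theorem map_commutatorElement_eq_zero (hsqK : ∀ g, g ^ 2 ∈ K)
    (hK : ∀ x ∈ K, ∀ y ∈ K, φ (x * y) = φ x + φ y) (hsq : ∀ g, φ (g ^ 2) = 2 • φ g)
    (hconj : ∀ g h, φ (g * h * g⁻¹) = φ h) (g h : G) : φ ⁅g, h⁆ = 0 := by
  have hcomm : φ (h * g) = φ (g * h) := by simpa using hconj g⁻¹ (g * h)
  have := map_mul_of_left_mem hsqK hK hsq hconj
    (K.commutatorElement_mem_of_forall_sq_mem hsqK g h) (h * g)
  rw [show ⁅g, h⁆ * (h * g) = g * h by rw [commutatorElement_def]; group, hcomm] at this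
  simpa using this

theorem map_mul_of_forall_sq_mem (hsqK : ∀ g, g ^ 2 ∈ K)
    (hK : ∀ x ∈ K, ∀ y ∈ K, φ (x * y) = φ x + φ y) (hsq : ∀ g, φ (g ^ 2) = 2 • φ g)
    (hconj : ∀ g h, φ (g * h * g⁻¹) = φ h) (g h : G) : φ (g * h) = φ g + φ h := by
  have key : (g * h) ^ 2 = g ^ 2 * (⁅g⁻¹, h⁆ * h ^ 2) := by
    rw [commutatorElement_def, sq, sq, sq]; group
  have hmul : ∀ x ∈ K, ∀ y, φ (x * y) = φ x + φ y := fun _ hx ↦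
    map_mul_of_left_mem hsqK hK hsq hconj hx
  refine IsAddTorsionFree.nsmul_right_injective two_ne_zero ?_
  calc 2 • φ (g * h) = φ (g ^ 2) + (φ ⁅g⁻¹, h⁆ + φ (h ^ 2)) := by
        rw [← hsq, key, hmul _ (hsqK g),
          hmul _ (K.commutatorElement_mem_of_forall_sq_mem hsqK _ _)]
    _ = 2 • (φ g + φ h) := by
        rw [map_commutatorElement_eq_zero hsqK hK hsq hconj, hsq, hsq]; abel

end Group

section Ring

variable (A : Type*) [Ring A]

def unitsCongrOne (n : ℕ) : Subgroup Aˣ where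
  carrier := {u | ∃ a : A, (u : A) = 1 + n * a}
  one_mem' := ⟨0, by simp⟩
  mul_mem' := by
    rintro u v ⟨a, ha⟩ ⟨b, hb⟩
    refine ⟨a + b + a * n * b, ?_⟩
    rw [Units.val_mul, ha, hb]
    noncomm_ring
  inv_mem' := by
    rintro u ⟨a, ha⟩
    have hcomm : (↑u⁻¹ : A) * (n * a) = n * (↑u⁻¹ * a) := by
      rw [← mul_assoc, ← mul_assoc, (Nat.cast_commute n _).eq]
    refine ⟨-(↑u⁻¹ * a), ?_⟩
    calc (↑u⁻¹ : A) = ↑u⁻¹ * (u - n * a) := by rw [ha, add_sub_cancel_right, mul_one]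
      _ = 1 + n * -(↑u⁻¹ * a) := by rw [mul_sub, Units.inv_mul, hcomm, mul_neg, sub_eq_add_neg]

instance (n : ℕ) : (unitsCongrOne A n).Normal where
  conj_mem := by
    rintro u ⟨a, ha⟩ g
    refine ⟨g * a * ↑g⁻¹, ?_⟩
    rw [Units.val_mul, Units.val_mul, ha, mul_add, add_mul, mul_one, Units.mul_inv, ← mul_assoc,
      (Nat.cast_commute n _).symm.eq]
    simp only [mul_assoc]

theorem sq_mem_unitsCongrOne_four {u : Aˣ} (hu : u ∈ unitsCongrOne A 2) :
    u ^ 2 ∈ unitsCongrOne A 4 := by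
  obtain ⟨a, ha⟩ := hu
  exact ⟨a + a * a, by rw [Units.val_pow_eq_pow_val, ha]; push_cast; noncomm_ring⟩

end Ring

theorem stmt14_general (A : Type*) [NormedRing A]
    (φ : Aˣ → ℚ_[2])
    (h4 : ∀ u v : Aˣ, (∃ a : A, (u : A) = 1 + 4 * a) → (∃ b : A, (v : A) = 1 + 4 * b) →
      φ (u * v) = φ u + φ v)
    (hpow : ∀ u : Aˣ, (∃ a : A, (u : A) = 1 + 2 * a) → ∀ n : ℤ,
      φ (u ^ n) = (n : ℚ_[2]) * φ u)
    (hconj : ∀ u a : Aˣ, (∃ b : A, (u : A) = 1 + 2 * b) → φ (a * u * a⁻¹) = φ u) :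
    ∀ u v : Aˣ, (∃ a : A, (u : A) = 1 + 2 * a) → (∃ b : A, (v : A) = 1 + 2 * b) →
      φ (u * v) = φ u + φ v := by
  intro u v hu hv
  -- `((2 : ℕ) : A)` unfolds to `(2 : A)`, so `hu`, `hv` are memberships in `unitsCongrOne A 2`.
  refine map_mul_of_forall_sq_mem (G := unitsCongrOne A 2)
    (K := (unitsCongrOne A 4).subgroupOf (unitsCongrOne A 2))
    (φ := fun w ↦ φ w) ?_ ?_ ?_ ?_ ⟨u, hu⟩ ⟨v, hv⟩
  · exact fun g ↦ sq_mem_unitsCongrOne_four A g.2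
  · exact fun x hx y hy ↦ h4 x y hx hy
  · intro g
    simpa using hpow g g.2 2
  · exact fun g h ↦ hconj h g h.2

/-- Let `A` be a `2`-adic Banach algebra over `ℤ_2` (the unit ball of
a `2`-adic Banach `ℚ_2`-algebra: a complete nonarchimedean normed ring all of whose
elements have norm `≤ 1`), and let `φ : Aˣ → ℚ_2` be a map satisfying: `φ` is a group
homomorphism on `1 + 4A`; `φ(u^n) = n·φ(u)` for `u ∈ 1 + 2A` and all integer powers;
and `φ(a u a⁻¹) = φ(u)` for all units `a` and `u ∈ 1 + 2A`.  Then `φ` is a group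
homomorphism on `1 + 2A`. -/
theorem stmt14 (A : Type*) [NormedRing A] [CompleteSpace A] [IsUltrametricDist A]
    (hball : ∀ x : A, ‖x‖ ≤ 1)
    (φ : Aˣ → ℚ_[2])
    (h4 : ∀ u v : Aˣ, (∃ a : A, (u : A) = 1 + 4 * a) → (∃ b : A, (v : A) = 1 + 4 * b) →
      φ (u * v) = φ u + φ v)
    (hpow : ∀ u : Aˣ, (∃ a : A, (u : A) = 1 + 2 * a) → ∀ n : ℤ,
      φ (u ^ n) = (n : ℚ_[2]) * φ u)
    (hconj : ∀ u a : Aˣ, (∃ b : A, (u : A) = 1 + 2 * b) → φ (a * u * a⁻¹) = φ u) :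
    ∀ u v : Aˣ, (∃ a : A, (u : A) = 1 + 2 * a) → (∃ b : A, (v : A) = 1 + 2 * b) →
      φ (u * v) = φ u + φ v :=
  stmt14_general A φ h4 hpow hconj
end

section
/- Let Γ be a countable residually finite discrete group and (Γ_n) a sequence of finite-index normal subgroups such that only the identity lies in infinitely many Γ_n. For g ∈ M_r(c₀(Γ)) let g^{(n)} ∈ M_r(ℚ_p Γ^{(n)}) be its image in the group algebra of Γ^{(n)} = Γ/Γ_n. Then tr_Γ(g) = lim_{n→∞} tr_{Γ^{(n)}}(g^{(n)}) in ℚ_p. -/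
/-!
Write `f γ = tr (g γ)`; it vanishes at infinity, and `tr_{Γ^{(n)}}(g^{(n)}) = Σ_{γ ∈ Γ_n} f γ`.
In an ultrametric space the norm of a sum is bounded by the largest norm of a term, so the
error `Σ_{γ ∈ Γ_n, γ ≠ 1} f γ` is small as soon as none of the finitely many `γ ≠ 1` with
`‖f γ‖ ≥ ε` lies in `Γ_n`, which holds for all large `n`. The same argument gives dominated
convergence for sums in a complete ultrametric group with a dominating function that only
vanishes at infinity instead of being summable.
-/

open Filter Topology

theorem tendsto_cofinite_zero_iff_finite_le_norm {α E : Type*} [SeminormedAddGroup E]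
    {f : α → E} : Tendsto f cofinite (𝓝 0) ↔ ∀ ε > 0, {x | ε ≤ ‖f x‖}.Finite := by
  simp only [NormedAddGroup.tendsto_nhds_zero, eventually_cofinite, not_lt]

section UltrametricDominatedConvergence

variable {α ι E : Type*} [NormedAddCommGroup E] [IsUltrametricDist E] [CompleteSpace E]

theorem tendsto_tsum_of_dominated_convergence_of_tendsto_cofinite_zero {l : Filter ι}
    [l.NeBot] {φ : ι → α → E} {ψ : α → E} {b : α → ℝ} (hb : Tendsto b cofinite (𝓝 0))
    (hφb : ∀ n x, ‖φ n x‖ ≤ b x) (hφψ : ∀ x, Tendsto (fun n => φ n x) l (𝓝 (ψ x))) :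
    Tendsto (fun n => ∑' x, φ n x) l (𝓝 (∑' x, ψ x)) := by
  have hψb (x : α) : ‖ψ x‖ ≤ b x :=
    le_of_tendsto (hφψ x).norm (Eventually.of_forall fun n => hφb n x)
  have summable_of_le_b {u : α → E} (hu : ∀ x, ‖u x‖ ≤ b x) : Summable u :=
    NonarchimedeanAddGroup.summable_of_tendsto_cofinite_zero <|
      squeeze_zero_norm' (Eventually.of_forall hu) hb
  rw [Metric.tendsto_nhds]
  intro ε hε
  have hF : {x | ε / 2 ≤ b x}.Finite := by
    simpa using eventually_cofinite.1 (hb.eventually (gt_mem_nhds (half_pos hε)))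
  filter_upwards [(eventually_all_finite hF).2 fun x _ =>
    Metric.tendsto_nhds.1 (hφψ x) _ (half_pos hε)] with n hn
  rw [dist_eq_norm, ← (summable_of_le_b (hφb n)).tsum_sub (summable_of_le_b hψb)]
  refine (IsUltrametricDist.norm_tsum_le_of_forall_le_of_nonneg (half_pos hε).le
    fun x => ?_).trans_lt (half_lt_self hε)
  by_cases hx : ε / 2 ≤ b x
  · exact (dist_eq_norm (φ n x) (ψ x) ▸ hn x hx).le
  · calc ‖φ n x - ψ x‖ ≤ max ‖φ n x‖ ‖-ψ x‖ := by
          simpa only [sub_eq_add_neg] using IsUltrametricDist.norm_add_le_max (φ n x) (-ψ x)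
      _ = max ‖φ n x‖ ‖ψ x‖ := by rw [norm_neg]
      _ ≤ ε / 2 := max_le ((hφb n x).trans (not_le.1 hx).le) ((hψb x).trans (not_le.1 hx).le)

theorem tendsto_tsum_subtype_of_eventually_notMem {l : Filter ι} [l.NeBot] {f : α → E}
    (hf : Tendsto f cofinite (𝓝 0)) {S : ι → Set α} {a : α} (ha : ∀ n, a ∈ S n)
    (hS : ∀ x ≠ a, ∀ᶠ n in l, x ∉ S n) :
    Tendsto (fun n => ∑' x : S n, f x) l (𝓝 (f a)) := by
  classical
  simp only [tsum_subtype]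
  rw [← tsum_ite_eq a f]
  refine tendsto_tsum_of_dominated_convergence_of_tendsto_cofinite_zero
    (by simpa using hf.norm) (fun n x => norm_indicator_le_norm_self f x) fun x => ?_
  by_cases hx : x = a
  · subst hx
    simp [ha]
  · refine tendsto_const_nhds.congr' ((hS x hx).mono fun n hn => ?_)
    simp [hx, hn]

end UltrametricDominatedConvergence

theorem stmt17_general (p : ℕ) [Fact p.Prime] (Γ : Type*) [Group Γ] (r : ℕ)
    (N : ℕ → Subgroup Γ)
    (hN : ∀ γ : Γ, γ ≠ 1 → {n | γ ∈ N n}.Finite)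
    (g : Γ → Matrix (Fin r) (Fin r) ℚ_[p])
    (hg : ∀ ε > (0:ℝ), ∀ i j, {γ | ε ≤ ‖g γ i j‖}.Finite) :
    Filter.Tendsto (fun n => Matrix.trace (∑' γ : (N n : Set Γ), g γ))
      Filter.atTop (nhds (Matrix.trace (g 1))) := by
  have hentry (i j : Fin r) : Tendsto (fun γ => g γ i j) cofinite (𝓝 0) :=
    tendsto_cofinite_zero_iff_finite_le_norm.2 fun ε hε => hg ε hε i j
  have htrace : Tendsto (fun γ => (g γ).trace) cofinite (𝓝 0) := by
    have hg0 : Tendsto g cofinite (𝓝 0) :=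
      tendsto_pi_nhds.2 fun i => tendsto_pi_nhds.2 fun j => hentry i j
    exact (continuous_id.matrix_trace.tendsto' 0 0 (Matrix.trace_zero _ _)).comp hg0
  have hsum (S : Set Γ) : Summable fun γ : S => g γ :=
    Pi.summable.2 fun i => Pi.summable.2 fun j =>
      (NonarchimedeanAddGroup.summable_of_tendsto_cofinite_zero (hentry i j)).subtype (· ∈ S)
  have htsum (n : ℕ) : (∑' γ : (N n : Set Γ), g γ).trace = ∑' γ : (N n : Set Γ), (g γ).trace :=
    (hsum _).map_tsum (Matrix.traceAddMonoidHom (Fin r) ℚ_[p]) continuous_id.matrix_trace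
  simp only [htsum]
  refine tendsto_tsum_subtype_of_eventually_notMem htrace (fun n => (N n).one_mem) fun γ hγ => ?_
  rw [← Nat.cofinite_eq_atTop]
  exact (hN γ hγ).eventually_cofinite_notMem

/-- Let `Γ` be a countable residually finite discrete group and
`(Γ_n)` a sequence of finite-index normal subgroups such that only the identity lies in
infinitely many `Γ_n`.  For `g ∈ M_r(c₀(Γ))` (a `Γ`-indexed family of `r × r` matrices
over `ℚ_p` whose entries vanish at infinity) let `g^{(n)} ∈ M_r(ℚ_p Γ^{(n)})` be its
image in the group algebra of `Γ^{(n)} = Γ/Γ_n`; its trace is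
`tr_{Γ^{(n)}}(g^{(n)}) = tr(Σ_{γ ∈ Γ_n} a_γ)`.  Then
`tr_Γ(g) = lim_{n→∞} tr_{Γ^{(n)}}(g^{(n)})` in `ℚ_p`. -/
theorem stmt17 (p : ℕ) [Fact p.Prime] (Γ : Type*) [Group Γ] [Countable Γ] (r : ℕ)
    (N : ℕ → Subgroup Γ) [∀ n, (N n).Normal] [∀ n, (N n).FiniteIndex]
    (hN : ∀ γ : Γ, γ ≠ 1 → {n | γ ∈ N n}.Finite)
    (g : Γ → Matrix (Fin r) (Fin r) ℚ_[p])
    (hg : ∀ ε > (0:ℝ), ∀ i j, {γ | ε ≤ ‖g γ i j‖}.Finite) :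
    Filter.Tendsto (fun n => Matrix.trace (∑' γ : (N n : Set Γ), g γ))
      Filter.atTop (nhds (Matrix.trace (g 1))) :=
  stmt17_general p Γ r N hN g hg
end
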